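/- arXiv:2411.19592 — 8 statements merged into one kernel-verified Lean document; each statement's English description precedes it below -/
import Mathlib

section
/- Let A_0, …, A_n be real numbers and M_0, …, M_n strictly positive real numbers with ∑_i A_i = 0 and ∑_i A_i M_i² = 0. Then the function q ↦ ∑_i A_i / (‖q‖² + M_i²) is Lebesgue integrable on ℝ⁴ and ∫_{ℝ⁴} ∑_i A_i / (‖q‖² + M_i²) dq = π² ∑_i A_i M_i² log(M_i²). -/
/-!
Expanding `1 / (r² + a)` to first order in `a` around `a = 1` leaves
`1 / (r² + 1) - (a - 1) / (r² + 1)²` plus a remainder `(a - 1)² / ((r² + 1)² (r² + a))` of order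
`r⁻⁶`. The conditions `∑ Aᵢ = 0` and `∑ Aᵢ Mᵢ² = 0` kill the weighted sums of the first two
terms, so the integrand is a combination of remainders, which are integrable on `ℝ⁴`. In polar
coordinates the remainder integrates to `2π² ∫₀^∞ r³ (…) dr`, and `r³ (…)` has the elementary
primitive `(a log ((r² + 1) / (r² + a)) + (a - 1) / (r² + 1)) / 2`, giving `π² (a log a - a + 1)`;
the terms `-a + 1` cancel once more in the weighted sum.
-/

open MeasureTheory Real Set Filter Metric Topology

section RadialFour

local notation "ℝ⁴" => EuclideanSpace ℝ (Fin 4)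

theorem measureReal_unitBall_fin_four : volume.real (ball (0 : ℝ⁴) 1) = π ^ 2 / 2 := by
  rw [measureReal_def, InnerProductSpace.volume_ball_of_dim_even (k := 2) (by simp)]
  norm_num [ENNReal.toReal_ofReal, pi_pos.le, div_nonneg]

theorem integrable_fun_norm_fin_four_iff {f : ℝ → ℝ} :
    Integrable (fun q : ℝ⁴ => f ‖q‖) ↔ IntegrableOn (fun y => y ^ 3 * f y) (Ioi 0) := by
  simpa using integrable_fun_norm_addHaar (volume : Measure ℝ⁴) (f := f)

theorem integral_fun_norm_fin_four (f : ℝ → ℝ) :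
    ∫ q : ℝ⁴, f ‖q‖ = 2 * π ^ 2 * ∫ y in Ioi 0, y ^ 3 * f y := by
  rw [integral_fun_norm_addHaar, measureReal_unitBall_fin_four]
  simp only [finrank_euclideanSpace_fin, nsmul_eq_mul, smul_eq_mul]
  norm_num
  ring

end RadialFour

noncomputable def propagatorRemainder (a r : ℝ) : ℝ :=
  (a - 1) ^ 2 / ((r ^ 2 + 1) ^ 2 * (r ^ 2 + a))

theorem one_div_add_eq_add_propagatorRemainder {a : ℝ} (ha : 0 < a) (r : ℝ) :
    1 / (r ^ 2 + a) = 1 / (r ^ 2 + 1) - (a - 1) / (r ^ 2 + 1) ^ 2 + propagatorRemainder a r := by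
  have : r ^ 2 + a ≠ 0 := by positivity
  unfold propagatorRemainder
  field_simp
  ring

theorem propagatorRemainder_nonneg {a : ℝ} (ha : 0 < a) (r : ℝ) :
    0 ≤ propagatorRemainder a r := by
  unfold propagatorRemainder
  positivity

theorem sum_div_add_eq_sum_mul_propagatorRemainder {ι : Type*} [Fintype ι] {A a : ι → ℝ}
    (ha : ∀ i, 0 < a i) (hA : ∑ i, A i = 0) (hAa : ∑ i, A i * a i = 0) (r : ℝ) :
    ∑ i, A i / (r ^ 2 + a i) = ∑ i, A i * propagatorRemainder (a i) r := by
  calc ∑ i, A i / (r ^ 2 + a i)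
      = ∑ i, (A i * (1 / (r ^ 2 + 1)) - (A i * a i - A i) * (1 / (r ^ 2 + 1) ^ 2)
          + A i * propagatorRemainder (a i) r) := by
        refine Finset.sum_congr rfl fun i _ => ?_
        rw [div_eq_mul_one_div, one_div_add_eq_add_propagatorRemainder (ha i)]
        ring
    _ = (∑ i, A i) * (1 / (r ^ 2 + 1)) - (∑ i, A i * a i - ∑ i, A i) * (1 / (r ^ 2 + 1) ^ 2)
          + ∑ i, A i * propagatorRemainder (a i) r := by
        simp only [Finset.sum_add_distrib, ← Finset.sum_mul, Finset.sum_sub_distrib]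
    _ = ∑ i, A i * propagatorRemainder (a i) r := by
        rw [hA, hAa]
        ring

noncomputable def propagatorRemainderPrimitive (a r : ℝ) : ℝ :=
  (a * (log (r ^ 2 + 1) - log (r ^ 2 + a)) + (a - 1) / (r ^ 2 + 1)) / 2

theorem hasDerivAt_propagatorRemainderPrimitive {a : ℝ} (ha : 0 < a) (r : ℝ) :
    HasDerivAt (propagatorRemainderPrimitive a) (r ^ 3 * propagatorRemainder a r) r := by
  have h1 : r ^ 2 + 1 ≠ 0 := by positivity
  have ha' : r ^ 2 + a ≠ 0 := by positivity
  have hsq (c : ℝ) : HasDerivAt (fun r : ℝ => r ^ 2 + c) (2 * r) r := by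
    simpa using (hasDerivAt_pow 2 r).add_const c
  have hG := ((((hsq 1).log h1).sub ((hsq a).log ha')).const_mul a).add
    (((hsq 1).inv h1).const_mul (a - 1)) |>.div_const 2
  refine (hG.congr_deriv ?_).congr_of_eventuallyEq (.of_forall fun x => ?_)
  · unfold propagatorRemainder
    field_simp
    ring
  · simp [propagatorRemainderPrimitive, div_eq_mul_inv]

theorem tendsto_propagatorRemainderPrimitive_atTop {a : ℝ} (ha : 0 < a) :
    Tendsto (propagatorRemainderPrimitive a) atTop (𝓝 0) := by
  have hsq : Tendsto (fun r : ℝ => r ^ 2) atTop atTop := tendsto_pow_atTop two_ne_zero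
  have hinv (c : ℝ) : Tendsto (fun r : ℝ => (r ^ 2 + c)⁻¹) atTop (𝓝 0) :=
    (tendsto_atTop_add_const_right _ c hsq).inv_tendsto_atTop
  have hratio : Tendsto (fun r : ℝ => (r ^ 2 + 1) / (r ^ 2 + a)) atTop (𝓝 1) := by
    have := (hinv a).const_mul (1 - a) |>.const_add 1
    rw [mul_zero, add_zero] at this
    refine this.congr fun r => ?_
    have : r ^ 2 + a ≠ 0 := by positivity
    field_simp
    ring
  have hlog : Tendsto (fun r : ℝ => log (r ^ 2 + 1) - log (r ^ 2 + a)) atTop (𝓝 0) := by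
    have := (continuousAt_log one_ne_zero).tendsto.comp hratio
    rw [log_one] at this
    exact this.congr fun r => log_div (by positivity) (by positivity)
  have := ((hlog.const_mul a).add ((hinv 1).const_mul (a - 1))).div_const 2
  simp only [mul_zero, add_zero, zero_div] at this
  exact this.congr fun r => by simp [propagatorRemainderPrimitive, div_eq_mul_inv]

theorem propagatorRemainderPrimitive_zero (a : ℝ) :
    propagatorRemainderPrimitive a 0 = -(a * log a - a + 1) / 2 := by
  simp [propagatorRemainderPrimitive]
  ring

theorem integrableOn_Ioi_pow_three_mul_propagatorRemainder {a : ℝ} (ha : 0 < a) :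
    IntegrableOn (fun y => y ^ 3 * propagatorRemainder a y) (Ioi 0) :=
  integrableOn_Ioi_deriv_of_nonneg' (fun r _ => hasDerivAt_propagatorRemainderPrimitive ha r)
    (fun r hr => mul_nonneg (pow_nonneg (le_of_lt hr) 3) (propagatorRemainder_nonneg ha r))
    (tendsto_propagatorRemainderPrimitive_atTop ha)

theorem integral_Ioi_pow_three_mul_propagatorRemainder {a : ℝ} (ha : 0 < a) :
    ∫ y in Ioi 0, y ^ 3 * propagatorRemainder a y = (a * log a - a + 1) / 2 := by
  rw [integral_Ioi_of_hasDerivAt_of_nonneg'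
    (fun r _ => hasDerivAt_propagatorRemainderPrimitive ha r)
    (fun r hr => mul_nonneg (pow_nonneg (le_of_lt hr) 3) (propagatorRemainder_nonneg ha r))
    (tendsto_propagatorRemainderPrimitive_atTop ha), propagatorRemainderPrimitive_zero]
  ring

theorem integrable_propagatorRemainder_norm {a : ℝ} (ha : 0 < a) :
    Integrable (fun q : EuclideanSpace ℝ (Fin 4) => propagatorRemainder a ‖q‖) :=
  integrable_fun_norm_fin_four_iff.2 (integrableOn_Ioi_pow_three_mul_propagatorRemainder ha)

theorem integral_propagatorRemainder_norm {a : ℝ} (ha : 0 < a) :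
    ∫ q : EuclideanSpace ℝ (Fin 4), propagatorRemainder a ‖q‖ = π ^ 2 * (a * log a - a + 1) := by
  rw [integral_fun_norm_fin_four, integral_Ioi_pow_three_mul_propagatorRemainder ha]
  ring

/-- Identity (int-q1): `∫_{ℝ⁴} ∑ᵢ Aᵢ/(‖q‖² + Mᵢ²) dq = π² ∑ᵢ Aᵢ Mᵢ² log Mᵢ²`. -/
theorem integral_pauliVillars_one_propagator (n : ℕ) (A M : Fin (n + 1) → ℝ)
    (hM : ∀ i, 0 < M i) (hA : ∑ i, A i = 0) (hAM : ∑ i, A i * M i ^ 2 = 0) :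
    Integrable (fun q : EuclideanSpace ℝ (Fin 4) => ∑ i, A i / (‖q‖ ^ 2 + M i ^ 2)) ∧
    ∫ q : EuclideanSpace ℝ (Fin 4), ∑ i, A i / (‖q‖ ^ 2 + M i ^ 2) =
      π ^ 2 * ∑ i, A i * M i ^ 2 * Real.log (M i ^ 2) := by
  have hM2 (i : Fin (n + 1)) : 0 < M i ^ 2 := pow_pos (hM i) 2
  have hint (i : Fin (n + 1)) : Integrable fun q : EuclideanSpace ℝ (Fin 4) =>
      A i * propagatorRemainder (M i ^ 2) ‖q‖ :=
    (integrable_propagatorRemainder_norm (hM2 i)).const_mul (A i)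
  simp_rw [sum_div_add_eq_sum_mul_propagatorRemainder hM2 hA hAM]
  refine ⟨integrable_finsetSum _ fun i _ => hint i, ?_⟩
  simp_rw [integral_finsetSum _ fun i _ => hint i, integral_const_mul,
    integral_propagatorRemainder_norm (hM2 _)]
  calc ∑ i, A i * (π ^ 2 * (M i ^ 2 * log (M i ^ 2) - M i ^ 2 + 1))
      = π ^ 2 * (∑ i, A i * M i ^ 2 * log (M i ^ 2) - ∑ i, A i * M i ^ 2 + ∑ i, A i) := by
        simp only [Finset.mul_sum, ← Finset.sum_sub_distrib, ← Finset.sum_add_distrib]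
        exact Finset.sum_congr rfl fun i _ => by ring
    _ = π ^ 2 * ∑ i, A i * M i ^ 2 * log (M i ^ 2) := by
        rw [hA, hAM]
        ring
end

section
/- Let A_0, …, A_n be real numbers and M_0, …, M_n strictly positive real numbers with ∑_i A_i = 0 and ∑_i A_i M_i² = 0, and fix a coordinate index μ ∈ {1,2,3,4}. Then the function q ↦ q_μ ∑_i A_i / (‖q‖² + M_i²) is Lebesgue integrable on ℝ⁴ and its integral over ℝ⁴ equals 0. -/
open MeasureTheory Real

lemma euclidean_abs_coord_le_norm (q : EuclideanSpace ℝ (Fin 4)) (μ : Fin 4) :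
    |q μ| ≤ ‖q‖ := by
  have h1 : |q μ| = √((q μ) ^ 2) := (Real.sqrt_sq_eq_abs _).symm
  rw [h1, EuclideanSpace.norm_eq]
  apply Real.sqrt_le_sqrt
  have := Finset.single_le_sum (f := fun i => ‖q i‖ ^ 2)
    (fun i _ => sq_nonneg _) (Finset.mem_univ μ)
  simpa [Real.norm_eq_abs, sq_abs] using this

set_option maxHeartbeats 1000000 in
/-- Identity (int-q1a): `∫_{ℝ⁴} q_μ ∑ᵢ Aᵢ/(‖q‖² + Mᵢ²) dq = 0`. -/
theorem integral_pauliVillars_one_propagator_coord (n : ℕ) (A M : Fin (n + 1) → ℝ)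
    (hM : ∀ i, 0 < M i) (hA : ∑ i, A i = 0) (hAM : ∑ i, A i * M i ^ 2 = 0)
    (μ : Fin 4) :
    Integrable (fun q : EuclideanSpace ℝ (Fin 4) =>
      q μ * ∑ i, A i / (‖q‖ ^ 2 + M i ^ 2)) ∧
    ∫ q : EuclideanSpace ℝ (Fin 4), q μ * ∑ i, A i / (‖q‖ ^ 2 + M i ^ 2) = 0 := by
  set f : EuclideanSpace ℝ (Fin 4) → ℝ :=
    fun q => q μ * ∑ i, A i / (‖q‖ ^ 2 + M i ^ 2) with hf
  have hMpos : ∀ i, (0:ℝ) < M i ^ 2 := fun i => pow_pos (hM i) 2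
  have hden : ∀ (q : EuclideanSpace ℝ (Fin 4)) i, 0 < ‖q‖ ^ 2 + M i ^ 2 := by
    intro q i
    have := hMpos i
    positivity
  -- key identity for x > 0
  have key : ∀ x : ℝ, 0 < x →
      ∑ i, A i / (x + M i ^ 2) = ∑ i, A i * M i ^ 4 / (x ^ 2 * (x + M i ^ 2)) := by
    intro x hx
    have hsplit : ∀ i, A i / (x + M i ^ 2)
        = A i / x - A i * M i ^ 2 / x ^ 2 + A i * M i ^ 4 / (x ^ 2 * (x + M i ^ 2)) := by
      intro i
      have hxi : x + M i ^ 2 ≠ 0 := by positivity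
      field_simp
      ring
    rw [Finset.sum_congr rfl (fun i _ => hsplit i)]
    rw [Finset.sum_add_distrib, Finset.sum_sub_distrib]
    rw [← Finset.sum_div, ← Finset.sum_div, hA, hAM]
    simp
  -- constants
  set C₁ : ℝ := ∑ i, |A i| / M i ^ 2 with hC₁
  set C₂ : ℝ := ∑ i, |A i| * M i ^ 4 with hC₂
  have hC₁0 : 0 ≤ C₁ := Finset.sum_nonneg fun i _ => by positivity
  have hC₂0 : 0 ≤ C₂ := Finset.sum_nonneg fun i _ => by positivity
  set C : ℝ := 32 * (C₁ + C₂) with hC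
  -- pointwise bound
  have hbound : ∀ q : EuclideanSpace ℝ (Fin 4), |f q| ≤ C * (1 + ‖q‖) ^ (-(5:ℝ)) := by
    intro q
    have h1q : (0:ℝ) < 1 + ‖q‖ := by positivity
    have hrpow : (1 + ‖q‖) ^ (-(5:ℝ)) = ((1 + ‖q‖) ^ (5:ℕ))⁻¹ := by
      rw [Real.rpow_neg h1q.le, ← Real.rpow_natCast (1 + ‖q‖) 5]
      norm_num
    rw [hrpow]
    have habsf : |f q| = |q μ| * |∑ i, A i / (‖q‖ ^ 2 + M i ^ 2)| := abs_mul _ _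
    rcases le_or_gt ‖q‖ 1 with hle | hgt
    · -- small q : use C₁ bound
      have hS : |∑ i, A i / (‖q‖ ^ 2 + M i ^ 2)| ≤ C₁ := by
        refine (Finset.abs_sum_le_sum_abs _ _).trans ?_
        apply Finset.sum_le_sum
        intro i _
        rw [abs_div, abs_of_pos (hden q i)]
        apply div_le_div_of_nonneg_left (abs_nonneg _) (hMpos i)
        · nlinarith [sq_nonneg ‖q‖]
      have h2 : |f q| ≤ C₁ := by
        rw [habsf]
        calc |q μ| * |∑ i, A i / (‖q‖ ^ 2 + M i ^ 2)| ≤ 1 * C₁ := by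
              apply mul_le_mul _ hS (abs_nonneg _) zero_le_one
              exact (euclidean_abs_coord_le_norm q μ).trans hle
          _ = C₁ := one_mul _
      have h3 : ((1 + ‖q‖) ^ (5:ℕ)) ≤ 32 := by
        calc (1 + ‖q‖) ^ (5:ℕ) ≤ 2 ^ (5:ℕ) := by
              apply pow_le_pow_left₀ (by positivity) (by linarith)
          _ = 32 := by norm_num
      have h4 : (32:ℝ)⁻¹ ≤ ((1 + ‖q‖) ^ (5:ℕ))⁻¹ :=
        inv_anti₀ (by positivity) h3
      calc |f q| ≤ C₁ := h2
        _ = (32 * C₁) * 32⁻¹ := by ring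
        _ ≤ C * ((1 + ‖q‖) ^ (5:ℕ))⁻¹ := by
            apply mul_le_mul _ h4 (by positivity) (by positivity)
            rw [hC]; nlinarith
    · -- large q : use key identity and C₂ bound
      have hq1 : (1:ℝ) ≤ ‖q‖ := hgt.le
      have hx : (0:ℝ) < ‖q‖ ^ 2 := by positivity
      have hS : |∑ i, A i / (‖q‖ ^ 2 + M i ^ 2)| ≤ C₂ / ‖q‖ ^ 6 := by
        rw [key _ hx]
        refine (Finset.abs_sum_le_sum_abs _ _).trans ?_
        rw [hC₂, Finset.sum_div]
        apply Finset.sum_le_sum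
        intro i _
        rw [abs_div, abs_mul, abs_of_pos (mul_pos (pow_pos hx 2) (hden q i))]
        have hMi4 : |M i ^ 4| = M i ^ 4 := abs_of_pos (pow_pos (hM i) 4)
        rw [hMi4]
        apply div_le_div_of_nonneg_left (by positivity)
          (pow_pos (lt_trans one_pos hgt) 6)
        nlinarith [hMpos i, sq_nonneg ‖q‖, hq1]
      have h2 : |f q| ≤ C₂ / ‖q‖ ^ 5 := by
        rw [habsf]
        calc |q μ| * |∑ i, A i / (‖q‖ ^ 2 + M i ^ 2)|
            ≤ ‖q‖ * (C₂ / ‖q‖ ^ 6) := by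
              apply mul_le_mul (euclidean_abs_coord_le_norm q μ) hS (abs_nonneg _)
                (by positivity)
          _ = C₂ / ‖q‖ ^ 5 := by
              have hqpos : (0:ℝ) < ‖q‖ := lt_trans one_pos hgt
              rw [mul_div_assoc', div_eq_div_iff (pow_pos hqpos 6).ne' (pow_pos hqpos 5).ne']
              ring
      have h3 : ((1 + ‖q‖) ^ (5:ℕ)) ≤ 32 * ‖q‖ ^ 5 := by
        calc (1 + ‖q‖) ^ (5:ℕ) ≤ (2 * ‖q‖) ^ (5:ℕ) := by
              apply pow_le_pow_left₀ (by positivity) (by linarith)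
          _ = 32 * ‖q‖ ^ 5 := by ring
      have h4 : ((1 + ‖q‖) ^ (5:ℕ))⁻¹ ≥ (32 * ‖q‖ ^ 5)⁻¹ :=
        inv_anti₀ (by positivity) h3
      calc |f q| ≤ C₂ / ‖q‖ ^ 5 := h2
        _ = (32 * C₂) * (32 * ‖q‖ ^ 5)⁻¹ := by
            have hqpos : (0:ℝ) < ‖q‖ := lt_trans one_pos hgt
            rw [mul_inv, div_eq_mul_inv]
            ring
        _ ≤ C * ((1 + ‖q‖) ^ (5:ℕ))⁻¹ := by
            apply mul_le_mul _ h4 (by positivity) (by positivity)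
            rw [hC]; nlinarith
  -- continuity, hence measurability
  have hcont : Continuous f := by
    apply Continuous.mul
    · exact (EuclideanSpace.proj μ).continuous
    · apply continuous_finset_sum
      intro i _
      exact continuous_const.div (by fun_prop) (fun q => (hden q i).ne')
  -- integrability
  have hdim : ((Module.finrank ℝ (EuclideanSpace ℝ (Fin 4)) : ℝ)) < 5 := by
    simp only [finrank_euclideanSpace, Fintype.card_fin]
    norm_num
  have hg : Integrable (fun q : EuclideanSpace ℝ (Fin 4) => C * (1 + ‖q‖) ^ (-(5:ℝ))) :=
    (integrable_one_add_norm hdim).const_mul C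
  have hint : Integrable f :=
    hg.mono' hcont.aestronglyMeasurable
      (Filter.Eventually.of_forall fun q => by
        have h1q : (0:ℝ) < 1 + ‖q‖ := by positivity
        calc ‖f q‖ = |f q| := rfl
          _ ≤ C * (1 + ‖q‖) ^ (-(5:ℝ)) := hbound q)
  refine ⟨hint, ?_⟩
  -- oddness
  have hodd : ∀ q : EuclideanSpace ℝ (Fin 4), f (-q) = - f q := by
    intro q
    have hcoord : (-q) μ = -(q μ) := rfl
    have hnorm : ‖-q‖ = ‖q‖ := norm_neg q
    simp only [hf, hcoord, hnorm, neg_mul]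
  have h1 : ∫ q : EuclideanSpace ℝ (Fin 4), f (-q) = ∫ q : EuclideanSpace ℝ (Fin 4), f q :=
    integral_neg_eq_self f volume
  have h2 : ∫ q : EuclideanSpace ℝ (Fin 4), f (-q)
      = - ∫ q : EuclideanSpace ℝ (Fin 4), f q := by
    simp_rw [hodd]
    exact integral_neg f
  have := h1.symm.trans h2
  linarith
end

section
/- Let A_0, …, A_n be real numbers with ∑_i A_i = 0, let M_0, …, M_n be strictly positive reals, and let p ∈ ℝ⁴. Then the function q ↦ ∑_i A_i / ((‖q+p‖² + M_i²)(‖q‖² + M_i²)) is Lebesgue integrable on ℝ⁴ and ∫_{ℝ⁴} ∑_i A_i / ((‖q+p‖² + M_i²)(‖q‖² + M_i²)) dq = -π² ∫_0^1 ∑_i A_i log(β(1-β)‖p‖² + M_i²) dβ. -/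
/-!
Feynman parametrisation writes each product of propagators as
`∫₀¹ (‖q + β p‖² + Δₘ(β))⁻² dβ` with `Δₘ(β) = β (1 - β) ‖p‖² + m`. For two masses `c ≤ d` the
difference of these integrands is nonnegative and, after the shift `q ↦ q - β p`, radial; in
four dimensions its `q`-integral is the elementary `π² (log Δ_d(β) - log Δ_c(β))`, which is
bounded in `β`, so Fubini applies. Since `∑ Aᵢ = 0`, subtracting the propagator of a fixed
reference mass from every term reduces the sum to such differences.
-/

open MeasureTheory Real Set Filter Module Topology

lemma hasDerivAt_log_sq_add_add_div (a : ℝ) (ha : 0 < a) (r : ℝ) :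
    HasDerivAt (fun r : ℝ => (log (r ^ 2 + a) + a / (r ^ 2 + a)) / 2)
      (r ^ 3 * ((r ^ 2 + a) ^ 2)⁻¹) r := by
  have hr : r ^ 2 + a ≠ 0 := by positivity
  have hsq : HasDerivAt (fun r : ℝ => r ^ 2 + a) (2 * r) r := by
    simpa using (hasDerivAt_pow 2 r).add_const a
  refine (((hsq.log hr).add ((hasDerivAt_const r a).div hsq hr)).div_const 2).congr_deriv ?_
  field_simp
  ring

lemma tendsto_log_sq_add_sub_log_sq_add (a b : ℝ) :
    Tendsto (fun r : ℝ => log (r ^ 2 + a) - log (r ^ 2 + b)) atTop (𝓝 0) := by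
  have h := ((tendsto_log_comp_add_sub_log a).sub (tendsto_log_comp_add_sub_log b)).comp
    (tendsto_pow_atTop (α := ℝ) two_ne_zero)
  refine (sub_zero (0 : ℝ) ▸ h).congr fun r => ?_
  simp only [Function.comp_apply]
  ring

lemma tendsto_div_sq_add_atTop (a : ℝ) : Tendsto (fun r : ℝ => a / (r ^ 2 + a)) atTop (𝓝 0) :=
  tendsto_const_nhds.div_atTop (tendsto_atTop_add_const_right _ a (tendsto_pow_atTop two_ne_zero))

lemma integral_Ioi_cube_mul_inv_sq_sub_inv_sq {a b : ℝ} (ha : 0 < a) (hab : a ≤ b) :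
    IntegrableOn (fun r : ℝ => r ^ 3 * (((r ^ 2 + a) ^ 2)⁻¹ - ((r ^ 2 + b) ^ 2)⁻¹)) (Ioi 0) ∧
    ∫ r in Ioi (0 : ℝ), r ^ 3 * (((r ^ 2 + a) ^ 2)⁻¹ - ((r ^ 2 + b) ^ 2)⁻¹) =
      (log b - log a) / 2 := by
  have hb : 0 < b := ha.trans_le hab
  set F : ℝ → ℝ := fun r =>
    (log (r ^ 2 + a) + a / (r ^ 2 + a)) / 2 - (log (r ^ 2 + b) + b / (r ^ 2 + b)) / 2
  have hderiv : ∀ r ∈ Ici (0 : ℝ),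
      HasDerivAt F (r ^ 3 * (((r ^ 2 + a) ^ 2)⁻¹ - ((r ^ 2 + b) ^ 2)⁻¹)) r := fun r _ => by
    rw [mul_sub]
    exact (hasDerivAt_log_sq_add_add_div a ha r).sub (hasDerivAt_log_sq_add_add_div b hb r)
  have hnonneg : ∀ r ∈ Ioi (0 : ℝ), 0 ≤ r ^ 3 * (((r ^ 2 + a) ^ 2)⁻¹ - ((r ^ 2 + b) ^ 2)⁻¹) :=
    fun r hr => mul_nonneg (pow_nonneg hr.le 3) (sub_nonneg.2 (by gcongr))
  have hlim : Tendsto F atTop (𝓝 0) := by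
    have h := (((tendsto_log_sq_add_sub_log_sq_add a b).add (tendsto_div_sq_add_atTop a)).sub
      (tendsto_div_sq_add_atTop b)).div_const 2
    convert h using 2 <;> ring
  refine ⟨integrableOn_Ioi_deriv_of_nonneg' hderiv hnonneg hlim, ?_⟩
  rw [integral_Ioi_of_hasDerivAt_of_nonneg' hderiv hnonneg hlim]
  norm_num [F, div_self ha.ne', div_self hb.ne']
  ring

lemma integral_inv_sq_convexComb {A B : ℝ} (hA : 0 < A) (hB : 0 < B) :
    ∫ β in (0 : ℝ)..1, ((β * A + (1 - β) * B) ^ 2)⁻¹ = (A * B)⁻¹ := by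
  have hpos : ∀ β ∈ uIcc (0 : ℝ) 1, 0 < β * A + (1 - β) * B := by
    intro β hβ
    rw [uIcc_of_le zero_le_one] at hβ
    rcases hβ.1.eq_or_lt with rfl | hβ0
    · simpa using hB
    · nlinarith [hβ.2]
  have hderiv : ∀ β ∈ uIcc (0 : ℝ) 1,
      HasDerivAt (fun β => β / (B * (β * A + (1 - β) * B))) ((β * A + (1 - β) * B) ^ 2)⁻¹ β := by
    intro β hβ
    have hden : HasDerivAt (fun β : ℝ => B * (β * A + (1 - β) * B)) (B * (A - B)) β := by
      have := ((hasDerivAt_id' β).mul_const A).add (((hasDerivAt_id' β).const_sub 1).mul_const B)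
      exact (this.const_mul B).congr_deriv (by ring)
    have hne : B * (β * A + (1 - β) * B) ≠ 0 := (mul_pos hB (hpos β hβ)).ne'
    refine ((hasDerivAt_id' β).div hden hne).congr_deriv ?_
    field_simp
    ring
  have hcont : ContinuousOn (fun β : ℝ => ((β * A + (1 - β) * B) ^ 2)⁻¹) (uIcc 0 1) :=
    ContinuousOn.inv₀ (by fun_prop) fun β hβ => pow_ne_zero 2 (hpos β hβ).ne'
  rw [intervalIntegral.integral_eq_sub_of_hasDerivAt hderiv hcont.intervalIntegrable]
  field_simp
  ring

lemma Finset.sum_mul_sub_of_sum_eq_zero {ι R : Type*} [NonUnitalNonAssocRing R] {s : Finset ι}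
    {A f : ι → R} (hA : ∑ i ∈ s, A i = 0) (x : R) :
    ∑ i ∈ s, A i * (f i - x) = ∑ i ∈ s, A i * f i := by
  simp [mul_sub, Finset.sum_sub_distrib, ← Finset.sum_mul, hA]

section FeynmanParameter

variable {E : Type*} [NormedAddCommGroup E]

def feynmanMass (p : E) (m β : ℝ) : ℝ := β * (1 - β) * ‖p‖ ^ 2 + m

lemma feynmanMass_pos (p : E) {m β : ℝ} (hm : 0 < m) (hβ : β ∈ Icc (0 : ℝ) 1) :
    0 < feynmanMass p m β := by
  have : 0 ≤ β * (1 - β) := mul_nonneg hβ.1 (sub_nonneg.2 hβ.2)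
  unfold feynmanMass
  positivity

lemma feynmanMass_le_feynmanMass (p : E) {c d : ℝ} (hcd : c ≤ d) (β : ℝ) :
    feynmanMass p c β ≤ feynmanMass p d β :=
  add_le_add_right hcd _

lemma continuousOn_log_feynmanMass (p : E) {m : ℝ} (hm : 0 < m) :
    ContinuousOn (fun β => log (feynmanMass p m β)) (Icc 0 1) :=
  ContinuousOn.log (by unfold feynmanMass; fun_prop) fun _ hβ => (feynmanMass_pos p hm hβ).ne'

variable [InnerProductSpace ℝ E]

lemma convexComb_norm_add_sq (p q : E) (β : ℝ) :
    β * ‖q + p‖ ^ 2 + (1 - β) * ‖q‖ ^ 2 = ‖q + β • p‖ ^ 2 + β * (1 - β) * ‖p‖ ^ 2 := by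
  rw [norm_add_sq_real, norm_add_sq_real, real_inner_smul_right, norm_smul, mul_pow,
    Real.norm_eq_abs, sq_abs]
  ring

lemma inv_mul_eq_integral_feynman (p q : E) {m : ℝ} (hm : 0 < m) :
    ((‖q + p‖ ^ 2 + m) * (‖q‖ ^ 2 + m))⁻¹ =
      ∫ β in (0 : ℝ)..1, ((‖q + β • p‖ ^ 2 + feynmanMass p m β) ^ 2)⁻¹ := by
  rw [← integral_inv_sq_convexComb (by positivity) (by positivity)]
  refine intervalIntegral.integral_congr fun β _ => ?_
  simp only [feynmanMass]
  rw [← add_assoc, ← convexComb_norm_add_sq]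
  ring_nf

end FeynmanParameter

section FourDimensional

variable {E : Type*} [NormedAddCommGroup E] [InnerProductSpace ℝ E] [FiniteDimensional ℝ E]
  [MeasurableSpace E] [BorelSpace E]

lemma measureReal_unitBall_of_finrank_eq_four (hE : finrank ℝ E = 4) :
    volume.real (Metric.ball (0 : E) 1) = π ^ 2 / 2 := by
  have : Nontrivial E := nontrivial_of_finrank_pos (R := ℝ) (by omega)
  rw [measureReal_def, InnerProductSpace.volume_ball_of_dim_even (k := 2) (by omega)]
  simp [ENNReal.toReal_ofReal (by positivity : 0 ≤ π ^ 2 / 2)]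

lemma integral_inv_sq_norm_sq_add_sub_inv_sq (hE : finrank ℝ E = 4) {a b : ℝ} (ha : 0 < a)
    (hab : a ≤ b) :
    Integrable (fun q : E => ((‖q‖ ^ 2 + a) ^ 2)⁻¹ - ((‖q‖ ^ 2 + b) ^ 2)⁻¹) ∧
    ∫ q : E, (((‖q‖ ^ 2 + a) ^ 2)⁻¹ - ((‖q‖ ^ 2 + b) ^ 2)⁻¹) = π ^ 2 * (log b - log a) := by
  have : Nontrivial E := nontrivial_of_finrank_pos (R := ℝ) (by omega)
  obtain ⟨hint, hval⟩ := integral_Ioi_cube_mul_inv_sq_sub_inv_sq ha hab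
  constructor
  · exact (integrable_fun_norm_addHaar volume
      (f := fun r : ℝ => ((r ^ 2 + a) ^ 2)⁻¹ - ((r ^ 2 + b) ^ 2)⁻¹)).2 (by simpa [hE] using hint)
  · rw [integral_fun_norm_addHaar volume (fun r : ℝ => ((r ^ 2 + a) ^ 2)⁻¹ - ((r ^ 2 + b) ^ 2)⁻¹),
      measureReal_unitBall_of_finrank_eq_four hE, hE]
    simp only [smul_eq_mul, nsmul_eq_mul]
    rw [hval]
    ring

lemma integral_shifted_inv_sq_sub_inv_sq (hE : finrank ℝ E = 4) (p : E) {c d β : ℝ}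
    (hc : 0 < c) (hcd : c ≤ d) (hβ : β ∈ Icc (0 : ℝ) 1) :
    Integrable (fun q : E => ((‖q + β • p‖ ^ 2 + feynmanMass p c β) ^ 2)⁻¹ -
      ((‖q + β • p‖ ^ 2 + feynmanMass p d β) ^ 2)⁻¹) ∧
    ∫ q : E, (((‖q + β • p‖ ^ 2 + feynmanMass p c β) ^ 2)⁻¹ -
      ((‖q + β • p‖ ^ 2 + feynmanMass p d β) ^ 2)⁻¹) =
      π ^ 2 * (log (feynmanMass p d β) - log (feynmanMass p c β)) := by
  obtain ⟨hint, hval⟩ := integral_inv_sq_norm_sq_add_sub_inv_sq hE (feynmanMass_pos p hc hβ)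
    (feynmanMass_le_feynmanMass p hcd β)
  exact ⟨hint.comp_add_right (β • p), (integral_add_right_eq_self _ (β • p)).trans hval⟩

lemma integrable_prod_shifted_inv_sq_sub_inv_sq (hE : finrank ℝ E = 4) (p : E) {c d : ℝ}
    (hc : 0 < c) (hcd : c ≤ d) :
    Integrable (fun z : ℝ × E => ((‖z.2 + z.1 • p‖ ^ 2 + feynmanMass p c z.1) ^ 2)⁻¹ -
      ((‖z.2 + z.1 • p‖ ^ 2 + feynmanMass p d z.1) ^ 2)⁻¹)
      ((volume.restrict (Ioc 0 1)).prod volume) := by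
  set H : ℝ → E → ℝ := fun β q => ((‖q + β • p‖ ^ 2 + feynmanMass p c β) ^ 2)⁻¹ -
    ((‖q + β • p‖ ^ 2 + feynmanMass p d β) ^ 2)⁻¹
  have hfiber : ∀ β ∈ Ioc (0 : ℝ) 1, Integrable (H β) ∧
      ∫ q, H β q = π ^ 2 * (log (feynmanMass p d β) - log (feynmanMass p c β)) :=
    fun β hβ => integral_shifted_inv_sq_sub_inv_sq hE p hc hcd (Ioc_subset_Icc_self hβ)
  have hnonneg : ∀ β ∈ Ioc (0 : ℝ) 1, ∀ q, 0 ≤ H β q := by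
    intro β hβ q
    have := feynmanMass_pos p hc (Ioc_subset_Icc_self hβ)
    have := feynmanMass_le_feynmanMass p hcd β
    exact sub_nonneg.2 (by gcongr)
  have hmeas : AEStronglyMeasurable (fun z : ℝ × E => H z.1 z.2)
      ((volume.restrict (Ioc 0 1)).prod volume) := by
    refine Measurable.aestronglyMeasurable (Measurable.sub ?_ ?_) <;>
      exact Continuous.measurable (by unfold feynmanMass; fun_prop) |>.inv
  rw [integrable_prod_iff hmeas]
  constructor
  · filter_upwards [ae_restrict_mem measurableSet_Ioc] with β hβ
    exact (hfiber β hβ).1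
  · have hlog : IntegrableOn
        (fun β => π ^ 2 * (log (feynmanMass p d β) - log (feynmanMass p c β))) (Ioc 0 1) :=
      (((continuousOn_log_feynmanMass p (hc.trans_le hcd)).sub
        (continuousOn_log_feynmanMass p hc)).const_smul (π ^ 2)).integrableOn_Icc.mono_set
        Ioc_subset_Icc_self
    refine hlog.congr_fun_ae ?_
    filter_upwards [ae_restrict_mem measurableSet_Ioc] with β hβ
    simp only [Real.norm_of_nonneg (hnonneg β hβ _)]
    exact (hfiber β hβ).2.symm

lemma integral_inv_mul_sub_inv_mul_of_le (hE : finrank ℝ E = 4) (p : E) {c d : ℝ} (hc : 0 < c)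
    (hcd : c ≤ d) :
    Integrable (fun q : E =>
      ((‖q + p‖ ^ 2 + c) * (‖q‖ ^ 2 + c))⁻¹ - ((‖q + p‖ ^ 2 + d) * (‖q‖ ^ 2 + d))⁻¹) ∧
    ∫ q : E, (((‖q + p‖ ^ 2 + c) * (‖q‖ ^ 2 + c))⁻¹ - ((‖q + p‖ ^ 2 + d) * (‖q‖ ^ 2 + d))⁻¹) =
      π ^ 2 * ∫ β in (0 : ℝ)..1, (log (feynmanMass p d β) - log (feynmanMass p c β)) := by
  have hprod := integrable_prod_shifted_inv_sq_sub_inv_sq hE p hc hcd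
  have hrepr : ∀ q : E,
      ((‖q + p‖ ^ 2 + c) * (‖q‖ ^ 2 + c))⁻¹ - ((‖q + p‖ ^ 2 + d) * (‖q‖ ^ 2 + d))⁻¹ =
        ∫ β in Ioc (0 : ℝ) 1, (((‖q + β • p‖ ^ 2 + feynmanMass p c β) ^ 2)⁻¹ -
          ((‖q + β • p‖ ^ 2 + feynmanMass p d β) ^ 2)⁻¹) := by
    intro q
    have hII : ∀ {m : ℝ}, 0 < m → IntervalIntegrable
        (fun β => ((‖q + β • p‖ ^ 2 + feynmanMass p m β) ^ 2)⁻¹) volume 0 1 := fun hm =>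
      ContinuousOn.intervalIntegrable_of_Icc zero_le_one <|
        ContinuousOn.inv₀ (by unfold feynmanMass; fun_prop) fun β hβ =>
          (pow_pos (add_pos_of_nonneg_of_pos (sq_nonneg _) (feynmanMass_pos p hm hβ)) 2).ne'
    rw [inv_mul_eq_integral_feynman p q hc, inv_mul_eq_integral_feynman p q (hc.trans_le hcd),
      ← intervalIntegral.integral_sub (hII hc) (hII (hc.trans_le hcd)),
      intervalIntegral.integral_of_le zero_le_one]
  simp_rw [hrepr]
  refine ⟨hprod.integral_prod_right, ?_⟩
  rw [← integral_integral_swap hprod, intervalIntegral.integral_of_le zero_le_one,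
    ← integral_const_mul]
  exact setIntegral_congr_fun measurableSet_Ioc fun β hβ =>
    (integral_shifted_inv_sq_sub_inv_sq hE p hc hcd (Ioc_subset_Icc_self hβ)).2

lemma integral_inv_mul_sub_inv_mul (hE : finrank ℝ E = 4) (p : E) {c d : ℝ} (hc : 0 < c)
    (hd : 0 < d) :
    Integrable (fun q : E =>
      ((‖q + p‖ ^ 2 + c) * (‖q‖ ^ 2 + c))⁻¹ - ((‖q + p‖ ^ 2 + d) * (‖q‖ ^ 2 + d))⁻¹) ∧
    ∫ q : E, (((‖q + p‖ ^ 2 + c) * (‖q‖ ^ 2 + c))⁻¹ - ((‖q + p‖ ^ 2 + d) * (‖q‖ ^ 2 + d))⁻¹) =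
      π ^ 2 * ∫ β in (0 : ℝ)..1, (log (feynmanMass p d β) - log (feynmanMass p c β)) := by
  rcases le_total c d with hcd | hdc
  · exact integral_inv_mul_sub_inv_mul_of_le hE p hc hcd
  · obtain ⟨hint, hval⟩ := integral_inv_mul_sub_inv_mul_of_le hE p hd hdc
    have hswap : ∀ q : E,
        ((‖q + p‖ ^ 2 + c) * (‖q‖ ^ 2 + c))⁻¹ - ((‖q + p‖ ^ 2 + d) * (‖q‖ ^ 2 + d))⁻¹ =
          -(((‖q + p‖ ^ 2 + d) * (‖q‖ ^ 2 + d))⁻¹ - ((‖q + p‖ ^ 2 + c) * (‖q‖ ^ 2 + c))⁻¹) :=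
      fun q => (neg_sub _ _).symm
    simp_rw [hswap]
    refine ⟨hint.neg, ?_⟩
    rw [integral_neg, hval, ← mul_neg, ← intervalIntegral.integral_neg]
    simp_rw [neg_sub]

end FourDimensional

/-- Identity (int-q2): the two-propagator Pauli–Villars integral in Feynman
parametrization. -/
theorem integral_pauliVillars_two_propagators (n : ℕ) (A M : Fin (n + 1) → ℝ)
    (hM : ∀ i, 0 < M i) (hA : ∑ i, A i = 0) (p : EuclideanSpace ℝ (Fin 4)) :
    Integrable (fun q : EuclideanSpace ℝ (Fin 4) =>
      ∑ i, A i / ((‖q + p‖ ^ 2 + M i ^ 2) * (‖q‖ ^ 2 + M i ^ 2))) ∧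
    ∫ q : EuclideanSpace ℝ (Fin 4),
        ∑ i, A i / ((‖q + p‖ ^ 2 + M i ^ 2) * (‖q‖ ^ 2 + M i ^ 2)) =
      -π ^ 2 * ∫ β in (0 : ℝ)..1,
        ∑ i, A i * Real.log (β * (1 - β) * ‖p‖ ^ 2 + M i ^ 2) := by
  have hpair i := integral_inv_mul_sub_inv_mul finrank_euclideanSpace_fin p (sq_pos_of_pos (hM i))
    one_pos
  have hlog i : IntervalIntegrable
      (fun β => log (feynmanMass p 1 β) - log (feynmanMass p (M i ^ 2) β)) volume 0 1 :=
    ((continuousOn_log_feynmanMass p one_pos).sub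
      (continuousOn_log_feynmanMass p (sq_pos_of_pos (hM i)))).intervalIntegrable_of_Icc
      zero_le_one
  have hq (q : EuclideanSpace ℝ (Fin 4)) :
      ∑ i, A i / ((‖q + p‖ ^ 2 + M i ^ 2) * (‖q‖ ^ 2 + M i ^ 2)) =
        ∑ i, A i * (((‖q + p‖ ^ 2 + M i ^ 2) * (‖q‖ ^ 2 + M i ^ 2))⁻¹ -
          ((‖q + p‖ ^ 2 + 1) * (‖q‖ ^ 2 + 1))⁻¹) := by
    simp only [Finset.sum_mul_sub_of_sum_eq_zero hA, div_eq_mul_inv]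
  have hβ (β : ℝ) : ∑ i, A i * log (β * (1 - β) * ‖p‖ ^ 2 + M i ^ 2) =
      -∑ i, A i * (log (feynmanMass p 1 β) - log (feynmanMass p (M i ^ 2) β)) := by
    rw [← Finset.sum_mul_sub_of_sum_eq_zero hA (log (feynmanMass p 1 β)),
      ← Finset.sum_neg_distrib]
    exact Finset.sum_congr rfl fun i _ => by rw [← mul_neg, neg_sub]; rfl
  simp_rw [hq, hβ]
  refine ⟨integrable_finsetSum _ fun i _ => (hpair i).1.const_mul (A i), ?_⟩
  rw [integral_finsetSum _ fun i _ => (hpair i).1.const_mul (A i), intervalIntegral.integral_neg,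
    intervalIntegral.integral_finsetSum fun i _ => (hlog i).const_mul (A i), neg_mul_neg,
    Finset.mul_sum]
  refine Finset.sum_congr rfl fun i _ => ?_
  rw [integral_const_mul, (hpair i).2, intervalIntegral.integral_const_mul]
  ring
end

section
/- Let A_0, …, A_n be real numbers with ∑_i A_i = 0 and let M_0, …, M_n be strictly positive reals. Fix coordinate indices μ, ν ∈ {1,2,3,4}. Then the function q ↦ q_μ q_ν ∑_i A_i / (‖q‖² + M_i²)³ is Lebesgue integrable on ℝ⁴ and ∫_{ℝ⁴} q_μ q_ν ∑_i A_i / (‖q‖² + M_i²)³ dq = -(π²/4) δ_{μν} ∑_i A_i log(M_i²), where δ_{μν} = 1 if μ = ν and 0 otherwise. -/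
/-!
Since `∑ i, A i = 0`, one may subtract `A i / (‖q‖² + 1)³` from every term for free. In polar
coordinates each subtracted term `r⁵ (1 / (r² + a)³ - 1 / (r² + 1)³)` has constant sign and the
explicit primitive `P a - P 1`, where
`P a r = log (r² + a) / 2 + a / (r² + a) - a² / (4 (r² + a)²)`, which tends to `0` at
infinity; hence it is integrable and
`∫_{ℝ⁴} ‖q‖² (1 / (‖q‖² + a)³ - 1 / (‖q‖² + 1)³) dq = -π² log a`.
Invariance of a radial integrand under coordinate reflections and permutations then turns
`q_μ q_ν` into `δ_{μν} ‖q‖² / 4`.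
-/

open MeasureTheory Real Filter Set Topology Module

lemma integral_comp_linearIsometryEquiv {E : Type*} [NormedAddCommGroup E] [InnerProductSpace ℝ E]
    [FiniteDimensional ℝ E] [MeasurableSpace E] [BorelSpace E] (L : E ≃ₗᵢ[ℝ] E) (f : E → ℝ) :
    ∫ x, f (L x) = ∫ x, f x :=
  L.measurePreserving.integral_comp L.toHomeomorph.measurableEmbedding f

namespace EuclideanSpace

variable {ι : Type*} [Fintype ι] (g : ℝ → ℝ)

lemma integral_coord_mul_coord_mul_norm_of_ne {μ ν : ι} (hμν : μ ≠ ν) :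
    ∫ q : EuclideanSpace ℝ ι, q μ * q ν * g ‖q‖ = 0 := by
  classical
  let R := LinearIsometryEquiv.piLpCongrRight 2 fun i : ι =>
    if i = μ then LinearIsometryEquiv.neg ℝ else LinearIsometryEquiv.refl ℝ ℝ
  have hR : ∀ q : EuclideanSpace ℝ ι, (R q) μ * (R q) ν * g ‖R q‖ = -(q μ * q ν * g ‖q‖) := by
    intro q
    rw [R.norm_map]
    simp [R, hμν.symm]
  have := integral_comp_linearIsometryEquiv R fun q => q μ * q ν * g ‖q‖
  simp only [hR, integral_neg] at this
  linarith

lemma integral_coord_mul_self_mul_norm_eq (μ κ : ι) :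
    ∫ q : EuclideanSpace ℝ ι, q κ * q κ * g ‖q‖ = ∫ q : EuclideanSpace ℝ ι, q μ * q μ * g ‖q‖ := by
  classical
  rw [← integral_comp_linearIsometryEquiv
    (LinearIsometryEquiv.piLpCongrLeft 2 ℝ ℝ (Equiv.swap μ κ))]
  simp [Equiv.piCongrLeft']

variable {g}

lemma integrable_coord_mul_coord_mul_norm (hg : Measurable g)
    (hint : Integrable fun q : EuclideanSpace ℝ ι => ‖q‖ ^ 2 * g ‖q‖) (μ ν : ι) :
    Integrable fun q : EuclideanSpace ℝ ι => q μ * q ν * g ‖q‖ := by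
  refine hint.norm.mono' ?_ (Eventually.of_forall fun q => ?_)
  · have : AEStronglyMeasurable (fun q : EuclideanSpace ℝ ι => g ‖q‖) :=
      (hg.comp measurable_norm).aestronglyMeasurable
    fun_prop
  · simp only [norm_mul, norm_norm, sq]
    gcongr
    · exact PiLp.norm_apply_le q μ
    · exact PiLp.norm_apply_le q ν

lemma integral_coord_mul_self_mul_norm (hg : Measurable g)
    (hint : Integrable fun q : EuclideanSpace ℝ ι => ‖q‖ ^ 2 * g ‖q‖) (μ : ι) :
    ∫ q : EuclideanSpace ℝ ι, q μ * q μ * g ‖q‖ =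
      (∫ q : EuclideanSpace ℝ ι, ‖q‖ ^ 2 * g ‖q‖) / Fintype.card ι := by
  have hcard : (Fintype.card ι : ℝ) ≠ 0 := by
    have : Nonempty ι := ⟨μ⟩
    positivity
  rw [eq_div_iff hcard]
  calc (∫ q : EuclideanSpace ℝ ι, q μ * q μ * g ‖q‖) * Fintype.card ι
      = ∑ κ : ι, ∫ q : EuclideanSpace ℝ ι, q κ * q κ * g ‖q‖ := by
        simp [integral_coord_mul_self_mul_norm_eq g μ, mul_comm]
    _ = ∫ q : EuclideanSpace ℝ ι, ‖q‖ ^ 2 * g ‖q‖ := by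
        rw [← integral_finsetSum _ fun κ _ => integrable_coord_mul_coord_mul_norm hg hint κ κ]
        simp_rw [real_norm_sq_eq, Finset.sum_mul, sq]

lemma integral_coord_mul_coord_mul_norm [DecidableEq ι] (hg : Measurable g)
    (hint : Integrable fun q : EuclideanSpace ℝ ι => ‖q‖ ^ 2 * g ‖q‖) (μ ν : ι) :
    ∫ q : EuclideanSpace ℝ ι, q μ * q ν * g ‖q‖ =
      (if μ = ν then 1 else 0) * (∫ q : EuclideanSpace ℝ ι, ‖q‖ ^ 2 * g ‖q‖) / Fintype.card ι := by
  split_ifs with hμν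
  · rw [hμν, one_mul, integral_coord_mul_self_mul_norm hg hint]
  · rw [integral_coord_mul_coord_mul_norm_of_ne g hμν, zero_mul, zero_div]

end EuclideanSpace

noncomputable def pauliVillarsKernel (a r : ℝ) : ℝ := 1 / (r ^ 2 + a) ^ 3 - 1 / (r ^ 2 + 1) ^ 3

noncomputable def pauliVillarsPrimitive (a r : ℝ) : ℝ :=
  log (r ^ 2 + a) / 2 + a / (r ^ 2 + a) - a ^ 2 / (4 * (r ^ 2 + a) ^ 2)

lemma measurable_pauliVillarsKernel (a : ℝ) : Measurable (pauliVillarsKernel a) := by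
  unfold pauliVillarsKernel
  fun_prop

lemma sum_mul_pauliVillarsKernel {ι : Type*} [Fintype ι] {A : ι → ℝ} (hA : ∑ i, A i = 0)
    (a : ι → ℝ) (r : ℝ) :
    ∑ i, A i * pauliVillarsKernel (a i) r = ∑ i, A i / (r ^ 2 + a i) ^ 3 := by
  simp only [pauliVillarsKernel, mul_sub, Finset.sum_sub_distrib, mul_one_div, ← Finset.sum_div, hA,
    zero_div, sub_zero]

lemma hasDerivAt_pauliVillarsPrimitive {a : ℝ} (ha : 0 < a) (r : ℝ) :
    HasDerivAt (pauliVillarsPrimitive a) (r ^ 5 / (r ^ 2 + a) ^ 3) r := by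
  have hpos : 0 < r ^ 2 + a := by positivity
  have hu : HasDerivAt (fun r : ℝ => r ^ 2 + a) (2 * r) r := by
    simpa using (hasDerivAt_pow 2 r).add_const a
  have hsq : HasDerivAt (fun r : ℝ => 4 * (r ^ 2 + a) ^ 2) (4 * (2 * (r ^ 2 + a) * (2 * r))) r := by
    simpa using (hu.pow 2).const_mul 4
  refine ((((hu.log hpos.ne').div_const 2).fun_add ((hasDerivAt_const r a).fun_div hu
    hpos.ne')).fun_sub ((hasDerivAt_const r (a ^ 2)).fun_div hsq (by positivity))).congr_deriv ?_
  field_simp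
  ring

lemma tendsto_pauliVillarsPrimitive_sub_log (a : ℝ) :
    Tendsto (fun r => pauliVillarsPrimitive a r - log (r ^ 2) / 2) atTop (𝓝 0) := by
  have hsq : Tendsto (fun r : ℝ => r ^ 2) atTop atTop := tendsto_pow_atTop two_ne_zero
  have hden : Tendsto (fun r : ℝ => r ^ 2 + a) atTop atTop := tendsto_atTop_add_const_right _ _ hsq
  have hlog := (tendsto_log_comp_add_sub_log a).comp hsq
  have h1 := hden.const_div_atTop a
  have h2 := ((tendsto_pow_atTop two_ne_zero).comp hden |>.const_mul_atTop four_pos)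
    |>.const_div_atTop (a ^ 2)
  convert ((hlog.div_const 2).add h1).sub h2 using 2 with r
  · simp only [pauliVillarsPrimitive, Function.comp_apply]
    ring
  · ring

lemma hasDerivAt_pauliVillarsPrimitive_sub {a : ℝ} (ha : 0 < a) (r : ℝ) :
    HasDerivAt (fun r => pauliVillarsPrimitive a r - pauliVillarsPrimitive 1 r)
      (r ^ 5 * pauliVillarsKernel a r) r := by
  refine ((hasDerivAt_pauliVillarsPrimitive ha r).sub
    (hasDerivAt_pauliVillarsPrimitive one_pos r)).congr_deriv ?_
  simp only [pauliVillarsKernel]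
  ring

lemma tendsto_pauliVillarsPrimitive_sub (a : ℝ) :
    Tendsto (fun r => pauliVillarsPrimitive a r - pauliVillarsPrimitive 1 r) atTop (𝓝 0) := by
  simpa using
    (tendsto_pauliVillarsPrimitive_sub_log a).sub (tendsto_pauliVillarsPrimitive_sub_log 1)

-- `pauliVillarsKernel a` has the sign of `1 - a`, so a primitive with a limit suffices.
lemma integrableOn_Ioi_pow_five_mul_pauliVillarsKernel {a : ℝ} (ha : 0 < a) :
    IntegrableOn (fun r => r ^ 5 * pauliVillarsKernel a r) (Ioi 0) := by
  have hderiv := fun r (_ : r ∈ Ici (0 : ℝ)) => hasDerivAt_pauliVillarsPrimitive_sub ha r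
  have hcube : ∀ {b c : ℝ}, 0 < b → b ≤ c → ∀ r : ℝ, 1 / (r ^ 2 + c) ^ 3 ≤ 1 / (r ^ 2 + b) ^ 3 :=
    fun hb hbc r => one_div_le_one_div_of_le (by positivity) (by gcongr)
  rcases le_total a 1 with h | h
  · refine integrableOn_Ioi_deriv_of_nonneg' hderiv (fun r hr => ?_)
      (tendsto_pauliVillarsPrimitive_sub a)
    exact mul_nonneg (pow_nonneg (le_of_lt hr) 5) (sub_nonneg.2 (hcube ha h r))
  · refine integrableOn_Ioi_deriv_of_nonpos' hderiv (fun r hr => ?_)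
      (tendsto_pauliVillarsPrimitive_sub a)
    exact mul_nonpos_of_nonneg_of_nonpos (pow_nonneg (le_of_lt hr) 5)
      (sub_nonpos.2 (hcube one_pos h r))

lemma integral_Ioi_pow_five_mul_pauliVillarsKernel {a : ℝ} (ha : 0 < a) :
    ∫ r in Ioi 0, r ^ 5 * pauliVillarsKernel a r = -log a / 2 := by
  rw [integral_Ioi_of_hasDerivAt_of_tendsto'
    (fun r _ => hasDerivAt_pauliVillarsPrimitive_sub ha r)
    (integrableOn_Ioi_pow_five_mul_pauliVillarsKernel ha) (tendsto_pauliVillarsPrimitive_sub a)]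
  norm_num [pauliVillarsPrimitive]
  field_simp
  ring

section

variable {E : Type*} [NormedAddCommGroup E] [InnerProductSpace ℝ E] [FiniteDimensional ℝ E]
  [MeasurableSpace E] [BorelSpace E]

lemma integrable_norm_sq_mul_pauliVillarsKernel (hE : finrank ℝ E = 4) {a : ℝ} (ha : 0 < a) :
    Integrable fun q : E => ‖q‖ ^ 2 * pauliVillarsKernel a ‖q‖ := by
  have : Nontrivial E := Module.nontrivial_of_finrank_pos (R := ℝ) (by omega)
  refine (integrable_fun_norm_addHaar volume (f := fun r => r ^ 2 * pauliVillarsKernel a r)).2 ?_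
  rw [hE]
  refine (integrableOn_Ioi_pow_five_mul_pauliVillarsKernel ha).congr_fun (fun r _ => ?_)
    measurableSet_Ioi
  simp only [smul_eq_mul]
  ring

lemma integral_norm_sq_mul_pauliVillarsKernel (hE : finrank ℝ E = 4) {a : ℝ} (ha : 0 < a) :
    ∫ q : E, ‖q‖ ^ 2 * pauliVillarsKernel a ‖q‖ = -π ^ 2 * log a := by
  have : Nontrivial E := Module.nontrivial_of_finrank_pos (R := ℝ) (by omega)
  have hball : volume.real (Metric.ball (0 : E) 1) = π ^ 2 / 2 := by
    rw [measureReal_def, InnerProductSpace.volume_ball_of_dim_even (k := 2) hE]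
    norm_num
    positivity
  rw [integral_fun_norm_addHaar volume (fun r => r ^ 2 * pauliVillarsKernel a r), hE, hball]
  simp only [smul_eq_mul]
  rw [integral_congr_ae (g := fun r => r ^ 5 * pauliVillarsKernel a r)
    (.of_forall fun r => by ring), integral_Ioi_pow_five_mul_pauliVillarsKernel ha]
  ring

end

lemma integrable_coord_mul_coord_mul_pauliVillarsKernel {a : ℝ} (ha : 0 < a) (μ ν : Fin 4) :
    Integrable fun q : EuclideanSpace ℝ (Fin 4) => q μ * q ν * pauliVillarsKernel a ‖q‖ :=
  EuclideanSpace.integrable_coord_mul_coord_mul_norm (measurable_pauliVillarsKernel a)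
    (integrable_norm_sq_mul_pauliVillarsKernel finrank_euclideanSpace_fin ha) μ ν

lemma integral_coord_mul_coord_mul_pauliVillarsKernel {a : ℝ} (ha : 0 < a) (μ ν : Fin 4) :
    ∫ q : EuclideanSpace ℝ (Fin 4), q μ * q ν * pauliVillarsKernel a ‖q‖ =
      -(π ^ 2 / 4) * (if μ = ν then 1 else 0) * log a := by
  rw [EuclideanSpace.integral_coord_mul_coord_mul_norm (measurable_pauliVillarsKernel a)
    (integrable_norm_sq_mul_pauliVillarsKernel finrank_euclideanSpace_fin ha),
    integral_norm_sq_mul_pauliVillarsKernel finrank_euclideanSpace_fin ha, Fintype.card_fin]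
  ring

/-- Identity (int-q9): `∫_{ℝ⁴} q_μ q_ν ∑ᵢ Aᵢ/(‖q‖²+Mᵢ²)³ dq
  = -(π²/4) δ_{μν} ∑ᵢ Aᵢ log Mᵢ²`. -/
theorem integral_pauliVillars_cube_two_coords (n : ℕ) (A M : Fin (n + 1) → ℝ)
    (hM : ∀ i, 0 < M i) (hA : ∑ i, A i = 0) (μ ν : Fin 4) :
    Integrable (fun q : EuclideanSpace ℝ (Fin 4) =>
      q μ * q ν * ∑ i, A i / (‖q‖ ^ 2 + M i ^ 2) ^ 3) ∧
    ∫ q : EuclideanSpace ℝ (Fin 4),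
        q μ * q ν * ∑ i, A i / (‖q‖ ^ 2 + M i ^ 2) ^ 3 =
      -(π ^ 2 / 4) * (if μ = ν then (1 : ℝ) else 0) *
        ∑ i, A i * Real.log (M i ^ 2) := by
  have hM2 (i : Fin (n + 1)) : 0 < M i ^ 2 := pow_pos (hM i) 2
  have hterm (i : Fin (n + 1)) :=
    (integrable_coord_mul_coord_mul_pauliVillarsKernel (hM2 i) μ ν).const_mul (A i)
  have hsplit : (fun q : EuclideanSpace ℝ (Fin 4) =>
      q μ * q ν * ∑ i, A i / (‖q‖ ^ 2 + M i ^ 2) ^ 3) =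
      fun q => ∑ i, A i * (q μ * q ν * pauliVillarsKernel (M i ^ 2) ‖q‖) := by
    ext q
    rw [← sum_mul_pauliVillarsKernel hA, Finset.mul_sum]
    exact Finset.sum_congr rfl fun i _ => by ring
  rw [hsplit, integral_finsetSum _ fun i _ => hterm i, Finset.mul_sum]
  refine ⟨integrable_finsetSum _ fun i _ => hterm i, Finset.sum_congr rfl fun i _ => ?_⟩
  rw [integral_const_mul, integral_coord_mul_coord_mul_pauliVillarsKernel (hM2 i)]
  ring
end

section
/- Let M > 0 and k, p ∈ ℝ⁴. Then q ↦ 1/((‖q‖²+M²)(‖q-k‖²+M²)(‖q+p‖²+M²)) is Lebesgue integrable on ℝ⁴ and ∫_{ℝ⁴} dq / ((‖q‖²+M²)(‖q-k‖²+M²)(‖q+p‖²+M²)) = π² ∫_0^1 dβ₁ ∫_0^{1-β₁} dβ₂ of 1/(β₁β₂‖k‖² + β₁β₃‖p‖² + β₂β₃‖k+p‖² + M²) with β₃ = 1-β₁-β₂. -/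
/-!
Feynman's formula writes `1 / (A B C)` as `2 ∫ (β₁ A + β₂ B + β₃ C)⁻³` over the simplex
`β₁ + β₂ + β₃ = 1`. For the three propagators `A, B, C` the convex combination is, after
completing the square, `‖q - c(β)‖² + Δ(β)` with `Δ(β)` the denominator on the right-hand side.
By Tonelli the `q`-integral can be done first: translation invariance and the radial integral
`∫_{ℝ⁴} (‖q‖² + Δ)⁻³ dq = π² / (2 Δ)` leave `π² ∫ Δ(β)⁻¹` over the simplex, which is finite
because `Δ ≥ M²`. Everything is nonnegative, so the computation is done with lower Lebesgue
integrals, and their finiteness is the integrability claim.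
-/

open MeasureTheory Real Set Filter Module Topology
open scoped ENNReal

section RegionBetween

variable {α : Type*} {f g : α → ℝ} {s : Set α}

theorem indicator_regionBetween_apply {β : Type*} [Zero β] (F : α × ℝ → β) (x : α) (y : ℝ) :
    (regionBetween f g s).indicator F (x, y) =
      s.indicator (fun x => (Ioo (f x) (g x)).indicator (fun y => F (x, y)) y) x := by
  by_cases hx : x ∈ s <;> by_cases hy : y ∈ Ioo (f x) (g x) <;>
    simp_all [regionBetween, indicator_apply]

variable [MeasurableSpace α] {μ : Measure α}

theorem setLIntegral_regionBetween (hf : Measurable f) (hg : Measurable g) (hs : MeasurableSet s)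
    {F : α × ℝ → ℝ≥0∞} (hF : Measurable F) :
    ∫⁻ z in regionBetween f g s, F z ∂μ.prod volume =
      ∫⁻ x in s, (∫⁻ y in Ioo (f x) (g x), F (x, y)) ∂μ := by
  have hR := measurableSet_regionBetween hf hg hs
  rw [← lintegral_indicator hR, lintegral_prod _ (hF.indicator hR).aemeasurable,
    ← lintegral_indicator hs]
  congr 1 with x
  by_cases hx : x ∈ s <;>
    simp [indicator_regionBetween_apply, hx, lintegral_indicator measurableSet_Ioo]

theorem setIntegral_regionBetween [SFinite μ] (hf : Measurable f) (hg : Measurable g)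
    (hs : MeasurableSet s) {F : α × ℝ → ℝ} (hF : IntegrableOn F (regionBetween f g s) (μ.prod volume)) :
    ∫ z in regionBetween f g s, F z ∂μ.prod volume =
      ∫ x in s, (∫ y in Ioo (f x) (g x), F (x, y)) ∂μ := by
  have hR := measurableSet_regionBetween hf hg hs
  rw [← integral_indicator hR, integral_prod _ ((integrable_indicator_iff hR).mpr hF),
    ← integral_indicator hs]
  congr 1 with x
  by_cases hx : x ∈ s <;>
    simp [indicator_regionBetween_apply, hx, integral_indicator measurableSet_Ioo]

end RegionBetween

theorem lintegral_Ioo_ofReal_eq_ofReal_intervalIntegral {f : ℝ → ℝ} {a b : ℝ} (hab : a ≤ b)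
    (hf : IntervalIntegrable f volume a b) (hf0 : ∀ x ∈ Ioo a b, 0 ≤ f x) :
    ∫⁻ x in Ioo a b, ENNReal.ofReal (f x) = ENNReal.ofReal (∫ x in a..b, f x) := by
  rw [intervalIntegral.integral_of_le hab, integral_Ioc_eq_integral_Ioo,
    ofReal_integral_eq_lintegral_ofReal
      (((intervalIntegrable_iff_integrableOn_Ioc_of_le hab).mp hf).mono_set Ioo_subset_Ioc_self)
      ((ae_restrict_iff' measurableSet_Ioo).mpr (ae_of_all _ hf0))]

theorem setIntegral_Ioo_eq_intervalIntegral {f : ℝ → ℝ} {a b : ℝ} (hab : a ≤ b) :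
    ∫ x in Ioo a b, f x = ∫ x in a..b, f x := by
  rw [intervalIntegral.integral_of_le hab, integral_Ioc_eq_integral_Ioo]

theorem add_mul_pos_of_mem_Icc {u v x s : ℝ} (hu : 0 < u) (hx : 0 < u + x * v)
    (hs : s ∈ Icc 0 x) : 0 < u + s * v := by
  rcases le_or_gt 0 v with hv | hv
  · nlinarith [hs.1]
  · nlinarith [hs.2]

theorem weighted_sum_three_pos {A B C t s : ℝ} (hA : 0 < A) (hB : 0 < B) (hC : 0 < C)
    (ht : 0 ≤ t) (hs : 0 ≤ s) (hts : t + s ≤ 1) : 0 < t * A + s * B + (1 - t - s) * C := by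
  have hm : min A (min B C) ≤ B := (min_le_right A _).trans (min_le_left B C)
  have hm' : min A (min B C) ≤ C := (min_le_right A _).trans (min_le_right B C)
  nlinarith [lt_min hA (lt_min hB hC), mul_le_mul_of_nonneg_left (min_le_left A (min B C)) ht,
    mul_le_mul_of_nonneg_left hm hs, mul_le_mul_of_nonneg_left hm' (by linarith : 0 ≤ 1 - t - s)]

theorem mul_add_one_sub_mul_pos {a b t : ℝ} (ha : 0 < a) (hb : 0 < b) (ht : t ∈ Icc 0 1) :
    0 < t * a + (1 - t) * b := by
  simpa using weighted_sum_three_pos ha ha hb ht.1 le_rfl (by linarith [ht.2])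

theorem integral_two_div_add_mul_pow_three {u v x : ℝ} (hx : 0 ≤ x) (hu : 0 < u)
    (hux : 0 < u + x * v) :
    ∫ s in (0 : ℝ)..x, 2 / (u + s * v) ^ 3 = x * (2 * u + x * v) / (u ^ 2 * (u + x * v) ^ 2) := by
  have hpos : ∀ s ∈ uIcc 0 x, 0 < u + s * v := fun s hs =>
    add_mul_pos_of_mem_Icc hu hux (uIcc_of_le hx ▸ hs)
  -- `(1 / u ^ 2 - 1 / (u + s * v) ^ 2) / v`, in a form that stays valid for `v = 0`
  have hderiv : ∀ s ∈ uIcc 0 x,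
      HasDerivAt (fun s => s * (2 * u + s * v) / (u ^ 2 * (u + s * v) ^ 2))
        (2 / (u + s * v) ^ 3) s := by
    intro s hs
    have hlin : ∀ w, HasDerivAt (fun s : ℝ => w + s * v) v s := fun w => by
      simpa using ((hasDerivAt_id s).mul_const v).const_add w
    have hden : u ^ 2 * (u + s * v) ^ 2 ≠ 0 := by have := hpos s hs; positivity
    refine (((hasDerivAt_id s).mul (hlin (2 * u))).div
      (((hlin u).pow 2).const_mul (u ^ 2)) hden).congr_deriv ?_
    have := (hpos s hs).ne'
    simp only [id, Pi.mul_apply, Pi.pow_apply]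
    field_simp
    ring
  rw [intervalIntegral.integral_eq_sub_of_hasDerivAt hderiv
    (ContinuousOn.intervalIntegrable fun s hs => ?_)]
  · simp
  · have := hpos s hs
    exact (continuousAt_const.div (by fun_prop) (by positivity)).continuousWithinAt

theorem integral_feynman_outer {A B C : ℝ} (hA : 0 < A) (hB : 0 < B)
    (hC : 0 < C) :
    ∫ t in (0 : ℝ)..1, (1 - t) * ((t * A + (1 - t) * C) + (t * A + (1 - t) * B)) /
        ((t * A + (1 - t) * C) ^ 2 * (t * A + (1 - t) * B) ^ 2) = 1 / (A * B * C) := by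
  have hpos : ∀ t ∈ uIcc (0 : ℝ) 1, 0 < t * A + (1 - t) * C ∧ 0 < t * A + (1 - t) * B := by
    intro t ht
    rw [uIcc_of_le zero_le_one] at ht
    exact ⟨mul_add_one_sub_mul_pos hA hC ht, mul_add_one_sub_mul_pos hA hB ht⟩
  have hderiv : ∀ t ∈ uIcc (0 : ℝ) 1, HasDerivAt
      (fun t => t * (B + C + (A - B - C) * t) /
        (B * C * (t * A + (1 - t) * C) * (t * A + (1 - t) * B)))
      ((1 - t) * ((t * A + (1 - t) * C) + (t * A + (1 - t) * B)) /
        ((t * A + (1 - t) * C) ^ 2 * (t * A + (1 - t) * B) ^ 2)) t := by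
    intro t ht
    obtain ⟨hP, hQ⟩ := hpos t ht
    have hlin : ∀ a b, HasDerivAt (fun t : ℝ => t * a + (1 - t) * b) (a - b) t := fun a b => by
      refine (((hasDerivAt_id t).mul_const a).add
        (((hasDerivAt_id t).const_sub 1).mul_const b)).congr_deriv ?_
      ring
    have hden : B * C * (t * A + (1 - t) * C) * (t * A + (1 - t) * B) ≠ 0 := by positivity
    refine (((hasDerivAt_id t).mul (((hasDerivAt_id t).const_mul (A - B - C)).const_add
      (B + C))).div (((hlin A C).const_mul (B * C)).mul (hlin A B)) hden).congr_deriv ?_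
    simp only [id, Pi.mul_apply]
    field_simp
    ring
  rw [intervalIntegral.integral_eq_sub_of_hasDerivAt hderiv
    (ContinuousOn.intervalIntegrable fun t ht => ?_)]
  · field_simp
    ring
  · obtain ⟨hP, hQ⟩ := hpos t ht
    exact (ContinuousAt.div (by fun_prop) (by fun_prop) (by positivity)).continuousWithinAt

-- The Feynman parameters `(β₁, β₂)`; the third one is `β₃ = 1 - β₁ - β₂`.
def feynmanSimplex : Set (ℝ × ℝ) := regionBetween 0 (fun t => 1 - t) (Ioo 0 1)

theorem measurableSet_feynmanSimplex : MeasurableSet feynmanSimplex :=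
  measurableSet_regionBetween measurable_zero (by fun_prop) measurableSet_Ioo

theorem volume_feynmanSimplex_lt_top : volume feynmanSimplex < ∞ := by
  refine (measure_mono fun b hb => ?_).trans_lt
    (isCompact_Icc (a := ((0 : ℝ), (0 : ℝ))) (b := (1, 1))).measure_lt_top
  obtain ⟨⟨ht0, ht1⟩, hs0, hs1⟩ := hb
  simp only [Pi.zero_apply] at hs0
  exact ⟨⟨ht0.le, hs0.le⟩, ⟨ht1.le, by linarith⟩⟩

theorem lintegral_feynmanSimplex {F : ℝ × ℝ → ℝ≥0∞} (hF : Measurable F) :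
    ∫⁻ b in feynmanSimplex, F b = ∫⁻ t in Ioo 0 1, ∫⁻ s in Ioo 0 (1 - t), F (t, s) := by
  rw [Measure.volume_eq_prod, feynmanSimplex,
    setLIntegral_regionBetween measurable_zero (by fun_prop) measurableSet_Ioo hF]
  rfl

theorem setIntegral_feynmanSimplex {F : ℝ × ℝ → ℝ} (hF : IntegrableOn F feynmanSimplex) :
    ∫ b in feynmanSimplex, F b = ∫ t in (0 : ℝ)..1, ∫ s in (0 : ℝ)..(1 - t), F (t, s) := by
  rw [Measure.volume_eq_prod] at hF ⊢
  rw [feynmanSimplex, setIntegral_regionBetween measurable_zero (by fun_prop) measurableSet_Ioo hF,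
    ← setIntegral_Ioo_eq_intervalIntegral zero_le_one]
  refine setIntegral_congr_fun measurableSet_Ioo fun t ht => ?_
  exact setIntegral_Ioo_eq_intervalIntegral (by simpa using ht.2.le)

theorem integral_feynman_inner {A B C t : ℝ} (hA : 0 < A) (hB : 0 < B) (hC : 0 < C)
    (ht : t ∈ Icc 0 1) :
    ∫ s in (0 : ℝ)..(1 - t), 2 / (t * A + s * B + (1 - t - s) * C) ^ 3 =
      (1 - t) * ((t * A + (1 - t) * C) + (t * A + (1 - t) * B)) /
        ((t * A + (1 - t) * C) ^ 2 * (t * A + (1 - t) * B) ^ 2) := by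
  have hP := mul_add_one_sub_mul_pos hA hC ht
  have hQ : 0 < (t * A + (1 - t) * C) + (1 - t) * (B - C) := by
    have := mul_add_one_sub_mul_pos hA hB ht
    linarith
  have hlin : ∀ s, t * A + s * B + (1 - t - s) * C = (t * A + (1 - t) * C) + s * (B - C) :=
    fun s => by ring
  simp_rw [hlin]
  rw [integral_two_div_add_mul_pow_three (by linarith [ht.2]) hP hQ]
  ring

theorem lintegral_feynmanSimplex_two_div_pow_three {A B C : ℝ} (hA : 0 < A) (hB : 0 < B)
    (hC : 0 < C) :
    ∫⁻ b in feynmanSimplex, ENNReal.ofReal (2 / (b.1 * A + b.2 * B + (1 - b.1 - b.2) * C) ^ 3) =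
      ENNReal.ofReal (1 / (A * B * C)) := by
  have hinner : ∀ t ∈ Ioo (0 : ℝ) 1,
      ∫⁻ s in Ioo 0 (1 - t), ENNReal.ofReal (2 / (t * A + s * B + (1 - t - s) * C) ^ 3) =
        ENNReal.ofReal ((1 - t) * ((t * A + (1 - t) * C) + (t * A + (1 - t) * B)) /
          ((t * A + (1 - t) * C) ^ 2 * (t * A + (1 - t) * B) ^ 2)) := by
    intro t ht
    have hx : 0 ≤ 1 - t := by linarith [ht.2]
    have hpos : ∀ s ∈ Icc 0 (1 - t), 0 < t * A + s * B + (1 - t - s) * C := fun s hs => by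
      simpa using weighted_sum_three_pos hA hB hC ht.1.le hs.1 (by linarith [hs.2])
    rw [lintegral_Ioo_ofReal_eq_ofReal_intervalIntegral hx
      (ContinuousOn.intervalIntegrable fun s hs => ?_) fun s hs => ?_,
      integral_feynman_inner hA hB hC (Ioo_subset_Icc_self ht)]
    · have := hpos s (uIcc_of_le hx ▸ hs)
      exact (continuousAt_const.div (by fun_prop) (by positivity)).continuousWithinAt
    · have := hpos s (Ioo_subset_Icc_self hs)
      positivity
  rw [lintegral_feynmanSimplex (by fun_prop), setLIntegral_congr_fun measurableSet_Ioo hinner,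
    lintegral_Ioo_ofReal_eq_ofReal_intervalIntegral zero_le_one
      (ContinuousOn.intervalIntegrable fun t ht => ?_) fun t ht => ?_,
    integral_feynman_outer hA hB hC]
  · rw [uIcc_of_le zero_le_one] at ht
    have := mul_add_one_sub_mul_pos hA hC ht
    have := mul_add_one_sub_mul_pos hA hB ht
    exact (ContinuousAt.div (by fun_prop) (by fun_prop) (by positivity)).continuousWithinAt
  · have := mul_add_one_sub_mul_pos hA hC (Ioo_subset_Icc_self ht)
    have := mul_add_one_sub_mul_pos hA hB (Ioo_subset_Icc_self ht)
    have : 0 ≤ 1 - t := by linarith [ht.2]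
    positivity

theorem weighted_norm_sub_sq_eq_norm_sub_barycenter_sq_add {E : Type*} [NormedAddCommGroup E]
    [InnerProductSpace ℝ E] {a b c : ℝ} (h : a + b + c = 1) (x y z q : E) :
    a * ‖q - x‖ ^ 2 + b * ‖q - y‖ ^ 2 + c * ‖q - z‖ ^ 2 =
      ‖q - (a • x + b • y + c • z)‖ ^ 2 +
        (a * b * ‖x - y‖ ^ 2 + a * c * ‖x - z‖ ^ 2 + b * c * ‖y - z‖ ^ 2) := by
  obtain rfl : c = 1 - a - b := by linarith
  simp only [← real_inner_self_eq_norm_sq, inner_sub_left, inner_sub_right, inner_add_left,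
    inner_add_right, real_inner_smul_left, real_inner_smul_right, real_inner_comm x y,
    real_inner_comm x z, real_inner_comm y z, real_inner_comm x q, real_inner_comm y q,
    real_inner_comm z q]
  ring

section Radial

variable {E : Type*} [NormedAddCommGroup E] [MeasurableSpace E] [BorelSpace E]

theorem integrable_one_div_norm_sq_add_pow [NormedSpace ℝ E] [FiniteDimensional ℝ E]
    (μ : Measure E) [μ.IsAddHaarMeasure] {Δ : ℝ} (hΔ : 0 < Δ) {n : ℕ}
    (hn : finrank ℝ E < 2 * n) :
    Integrable (fun x => 1 / (‖x‖ ^ 2 + Δ) ^ n) μ := by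
  set m := min Δ 1
  have hm : 0 < m := lt_min hΔ one_pos
  have hbound : ∀ x : E, 1 / (‖x‖ ^ 2 + Δ) ^ n ≤ (2 / m) ^ n * (1 + ‖x‖) ^ (-(2 * n : ℝ)) := by
    intro x
    -- (1 + r)² ≤ 2 (1 + r²) ≤ (2 / m) (r² + Δ)
    have hsq : (1 + ‖x‖) ^ 2 ≤ 2 / m * (‖x‖ ^ 2 + Δ) := by
      rw [div_mul_eq_mul_div, le_div_iff₀ hm]
      nlinarith [sq_nonneg (1 - ‖x‖), norm_nonneg x, min_le_left Δ 1, min_le_right Δ 1]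
    have hpow : (1 + ‖x‖) ^ (2 * n) ≤ (2 / m) ^ n * (‖x‖ ^ 2 + Δ) ^ n := by
      rw [pow_mul, ← mul_pow]
      exact pow_le_pow_left₀ (by positivity) hsq n
    rw [rpow_neg (by positivity), show (2 * n : ℝ) = ((2 * n : ℕ) : ℝ) by push_cast; ring,
      rpow_natCast, ← div_eq_mul_inv, div_le_div_iff₀ (by positivity) (by positivity)]
    linarith
  refine ((integrable_one_add_norm (r := 2 * n) (by exact_mod_cast hn)).const_mul
    ((2 / m) ^ n)).mono'
    (Measurable.aestronglyMeasurable (by fun_prop)) (ae_of_all _ fun x => ?_)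
  rw [norm_of_nonneg (by positivity)]
  exact hbound x

theorem integral_Ioi_pow_three_div_sq_add_pow_three {Δ : ℝ} (hΔ : 0 < Δ) :
    ∫ r in Ioi (0 : ℝ), r ^ 3 * (1 / (r ^ 2 + Δ) ^ 3) = 1 / (4 * Δ) := by
  set F : ℝ → ℝ := fun r => Δ * (4 * (r ^ 2 + Δ) ^ 2)⁻¹ - (2 * (r ^ 2 + Δ))⁻¹
  have hderiv : ∀ r ∈ Ici (0 : ℝ), HasDerivAt F (r ^ 3 * (1 / (r ^ 2 + Δ) ^ 3)) r := by
    intro r _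
    have hw : HasDerivAt (fun r : ℝ => r ^ 2 + Δ) (2 * r) r := by
      simpa using (hasDerivAt_pow 2 r).add_const Δ
    have hw0 : r ^ 2 + Δ ≠ 0 := by positivity
    refine ((((hw.fun_pow 2).const_mul 4).inv (by positivity)).const_mul Δ |>.sub
      ((hw.const_mul 2).inv (by positivity))).congr_deriv ?_
    field_simp
    ring
  have htend : Tendsto F atTop (𝓝 0) := by
    have hw : Tendsto (fun r : ℝ => r ^ 2 + Δ) atTop atTop :=
      tendsto_atTop_add_const_right _ Δ (tendsto_pow_atTop two_ne_zero)
    have h := (((hw.atTop_mul_atTop₀ hw).const_mul_atTop four_pos).inv_tendsto_atTop.const_mul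
      Δ).sub ((hw.const_mul_atTop two_pos).inv_tendsto_atTop.const_mul 1)
    simp only [mul_zero, sub_zero] at h
    exact h.congr fun r => by simp only [F, sq, Pi.inv_apply, one_mul]
  rw [integral_Ioi_of_hasDerivAt_of_nonneg' hderiv (fun r hr => by have : 0 < r := hr; positivity)
    htend]
  simp only [F]
  field_simp
  ring

variable [InnerProductSpace ℝ E] [FiniteDimensional ℝ E]

theorem integral_one_div_norm_sq_add_pow_three (hE : finrank ℝ E = 4) {Δ : ℝ} (hΔ : 0 < Δ) :
    ∫ x : E, 1 / (‖x‖ ^ 2 + Δ) ^ 3 = π ^ 2 / (2 * Δ) := by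
  have : Nontrivial E := Module.nontrivial_of_finrank_eq_succ hE
  have hball : volume.real (Metric.ball (0 : E) 1) = π ^ 2 / 2 := by
    rw [measureReal_def, InnerProductSpace.volume_ball, hE]
    have hsqrt : √π ^ 4 = π ^ 2 := by rw [show 4 = 2 * 2 from rfl, pow_mul, sq_sqrt pi_pos.le]
    norm_num [Gamma_nat_eq_factorial, hsqrt, ENNReal.toReal_ofReal]
    positivity
  rw [integral_fun_norm_addHaar volume (fun r => 1 / (r ^ 2 + Δ) ^ 3), hE, hball]
  simp only [smul_eq_mul, nsmul_eq_mul]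
  rw [integral_Ioi_pow_three_div_sq_add_pow_three hΔ]
  field_simp
  ring

theorem lintegral_two_div_norm_sub_sq_add_pow_three (hE : finrank ℝ E = 4) {Δ : ℝ} (hΔ : 0 < Δ)
    (c : E) :
    ∫⁻ x : E, ENNReal.ofReal (2 / (‖x - c‖ ^ 2 + Δ) ^ 3) = ENNReal.ofReal (π ^ 2 / Δ) := by
  rw [lintegral_sub_right_eq_self (fun x => ENNReal.ofReal (2 / (‖x‖ ^ 2 + Δ) ^ 3)) c]
  simp_rw [div_eq_mul_one_div (2 : ℝ)]
  rw [← ofReal_integral_eq_lintegral_ofReal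
      ((integrable_one_div_norm_sq_add_pow volume hΔ (by omega)).const_mul 2)
      (ae_of_all _ fun x => by positivity),
    integral_const_mul, integral_one_div_norm_sq_add_pow_three hE hΔ]
  congr 1
  field_simp

end Radial

theorem integrable_and_integral_eq_of_lintegral_ofReal_eq {X Y : Type*} [MeasurableSpace X]
    [MeasurableSpace Y] {μ : Measure X} {ν : Measure Y} {f : X → ℝ} {g : Y → ℝ}
    (hf : AEStronglyMeasurable f μ) (hf0 : 0 ≤ᵐ[μ] f) (hg : Integrable g ν) (hg0 : 0 ≤ᵐ[ν] g)
    (h : ∫⁻ x, ENNReal.ofReal (f x) ∂μ = ∫⁻ y, ENNReal.ofReal (g y) ∂ν) :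
    Integrable f μ ∧ ∫ x, f x ∂μ = ∫ y, g y ∂ν := by
  refine ⟨⟨hf, ?_⟩, ?_⟩
  · rw [hasFiniteIntegral_iff_ofReal hf0, h]
    exact ((hasFiniteIntegral_iff_ofReal hg0).mp hg.2)
  · rw [integral_eq_lintegral_of_nonneg_ae hf0 hf, integral_eq_lintegral_of_nonneg_ae hg0 hg.1, h]

section Propagators

variable {E : Type*} [NormedAddCommGroup E]

def feynmanDelta (M : ℝ) (k p : E) (b : ℝ × ℝ) : ℝ :=
  b.1 * b.2 * ‖k‖ ^ 2 + b.1 * (1 - b.1 - b.2) * ‖p‖ ^ 2 + b.2 * (1 - b.1 - b.2) * ‖k + p‖ ^ 2 +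
    M ^ 2

theorem sq_le_feynmanDelta (M : ℝ) (k p : E) {b : ℝ × ℝ} (hb : b ∈ feynmanSimplex) :
    M ^ 2 ≤ feynmanDelta M k p b := by
  obtain ⟨⟨ht, -⟩, hs, hts⟩ := hb
  simp only [Pi.zero_apply] at hs
  have : 0 ≤ 1 - b.1 - b.2 := by linarith
  exact le_add_of_nonneg_left (by positivity)

theorem feynmanDelta_pos {M : ℝ} (hM : 0 < M) (k p : E) {b : ℝ × ℝ} (hb : b ∈ feynmanSimplex) :
    0 < feynmanDelta M k p b :=
  (sq_pos_of_pos hM).trans_le (sq_le_feynmanDelta M k p hb)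

theorem integrableOn_one_div_feynmanDelta {M : ℝ} (hM : 0 < M) (k p : E) :
    IntegrableOn (fun b => 1 / feynmanDelta M k p b) feynmanSimplex := by
  refine Measure.integrableOn_of_bounded (M := 1 / M ^ 2) volume_feynmanSimplex_lt_top.ne
    (Measurable.aestronglyMeasurable (by unfold feynmanDelta; fun_prop)) ?_
  refine (ae_restrict_iff' measurableSet_feynmanSimplex).mpr (ae_of_all _ fun b hb => ?_)
  have := feynmanDelta_pos hM k p hb
  rw [norm_of_nonneg (by positivity)]
  gcongr
  exact sq_le_feynmanDelta M k p hb

variable [InnerProductSpace ℝ E]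

theorem feynman_denominator_eq (M : ℝ) (k p q : E) (b : ℝ × ℝ) :
    b.1 * (‖q‖ ^ 2 + M ^ 2) + b.2 * (‖q - k‖ ^ 2 + M ^ 2) +
        (1 - b.1 - b.2) * (‖q + p‖ ^ 2 + M ^ 2) =
      ‖q - (b.2 • k - (1 - b.1 - b.2) • p)‖ ^ 2 + feynmanDelta M k p b := by
  have h := weighted_norm_sub_sq_eq_norm_sub_barycenter_sq_add
    (by ring : b.1 + b.2 + (1 - b.1 - b.2) = 1) 0 k (-p) q
  simp only [sub_zero, sub_neg_eq_add, zero_sub, norm_neg, smul_zero, zero_add, smul_neg,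
    ← sub_eq_add_neg] at h
  unfold feynmanDelta
  linear_combination h

variable [FiniteDimensional ℝ E] [MeasurableSpace E] [BorelSpace E]

theorem lintegral_three_propagators (hE : finrank ℝ E = 4) {M : ℝ} (hM : 0 < M) (k p : E) :
    ∫⁻ q : E, ENNReal.ofReal
        (1 / ((‖q‖ ^ 2 + M ^ 2) * (‖q - k‖ ^ 2 + M ^ 2) * (‖q + p‖ ^ 2 + M ^ 2))) =
      ∫⁻ b in feynmanSimplex, ENNReal.ofReal (π ^ 2 * (1 / feynmanDelta M k p b)) :=
  calc _ = ∫⁻ q : E, ∫⁻ b in feynmanSimplex, ENNReal.ofReal (2 / (b.1 * (‖q‖ ^ 2 + M ^ 2) +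
          b.2 * (‖q - k‖ ^ 2 + M ^ 2) + (1 - b.1 - b.2) * (‖q + p‖ ^ 2 + M ^ 2)) ^ 3) :=
        lintegral_congr fun q => (lintegral_feynmanSimplex_two_div_pow_three (by positivity)
          (by positivity) (by positivity)).symm
    _ = ∫⁻ b in feynmanSimplex, ∫⁻ q : E, ENNReal.ofReal (2 / (b.1 * (‖q‖ ^ 2 + M ^ 2) +
          b.2 * (‖q - k‖ ^ 2 + M ^ 2) + (1 - b.1 - b.2) * (‖q + p‖ ^ 2 + M ^ 2)) ^ 3) :=
        lintegral_lintegral_swap (Measurable.aemeasurable (by fun_prop))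
    _ = _ := by
      refine setLIntegral_congr_fun measurableSet_feynmanSimplex fun b hb => ?_
      simp_rw [feynman_denominator_eq, mul_one_div]
      exact lintegral_two_div_norm_sub_sq_add_pow_three hE (feynmanDelta_pos hM k p hb) _

end Propagators

/-- Identity (int-q4): the three-propagator integral in Feynman parametrization. -/
theorem integral_three_propagators (M : ℝ) (hM : 0 < M)
    (k p : EuclideanSpace ℝ (Fin 4)) :
    Integrable (fun q : EuclideanSpace ℝ (Fin 4) =>
      1 / ((‖q‖ ^ 2 + M ^ 2) * (‖q - k‖ ^ 2 + M ^ 2) * (‖q + p‖ ^ 2 + M ^ 2))) ∧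
    ∫ q : EuclideanSpace ℝ (Fin 4),
        1 / ((‖q‖ ^ 2 + M ^ 2) * (‖q - k‖ ^ 2 + M ^ 2) * (‖q + p‖ ^ 2 + M ^ 2)) =
      π ^ 2 * ∫ β₁ in (0 : ℝ)..1, ∫ β₂ in (0 : ℝ)..(1 - β₁),
        1 / (β₁ * β₂ * ‖k‖ ^ 2 + β₁ * (1 - β₁ - β₂) * ‖p‖ ^ 2 +
          β₂ * (1 - β₁ - β₂) * ‖k + p‖ ^ 2 + M ^ 2) := by
  have hΔ := integrableOn_one_div_feynmanDelta hM k p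
  obtain ⟨hint, heq⟩ := integrable_and_integral_eq_of_lintegral_ofReal_eq
    (Measurable.aestronglyMeasurable (by fun_prop)) (ae_of_all _ fun q => by positivity)
    (hΔ.const_mul (π ^ 2))
    ((ae_restrict_iff' measurableSet_feynmanSimplex).mpr (ae_of_all _ fun b hb => by
      have := feynmanDelta_pos hM k p hb; positivity))
    (lintegral_three_propagators finrank_euclideanSpace_fin hM k p)
  refine ⟨hint, ?_⟩
  rw [heq, integral_const_mul, setIntegral_feynmanSimplex hΔ]
  rfl
end

section
/- Let M > 0. Then q ↦ 1/(‖q‖²+M²)⁴ is Lebesgue integrable on ℝ⁴ and ∫_{ℝ⁴} dq/(‖q‖²+M²)⁴ = π²/(6M⁴). -/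
open MeasureTheory Real Filter Set Topology

/-!
Integrating in polar coordinates on a 4-dimensional space, where the unit sphere has area
`4 · vol(B⁴) = 2π²`, turns the integral into `2π² ∫₀^∞ r³ / (r² + M²)⁴ dr`. With `a = M²`, the
integrand `r³ / (r² + a)⁴` has the primitive `a / (6 (r² + a)³) - 1 / (4 (r² + a)²)`, which
vanishes at infinity and equals `-1 / (12 a²)` at `0`; since the integrand is nonnegative this
also gives its integrability.
-/

theorem hasDerivAt_primitive_pow_three_div_sq_add_pow_four {a : ℝ} (ha : 0 < a) (y : ℝ) :
    HasDerivAt (fun y : ℝ => a / (6 * (y ^ 2 + a) ^ 3) - 1 / (4 * (y ^ 2 + a) ^ 2))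
      (y ^ 3 / (y ^ 2 + a) ^ 4) y := by
  have hs : HasDerivAt (fun y : ℝ => y ^ 2 + a) (2 * y) y := by
    simpa using (hasDerivAt_pow 2 y).add_const a
  have h3 := (hasDerivAt_const y a).div ((hs.pow 3).const_mul 6)
    (by positivity : 6 * (y ^ 2 + a) ^ 3 ≠ 0)
  have h2 := (hasDerivAt_const y (1 : ℝ)).div ((hs.pow 2).const_mul 4)
    (by positivity : 4 * (y ^ 2 + a) ^ 2 ≠ 0)
  refine (h3.sub h2).congr_deriv ?_
  simp only [Pi.pow_apply]
  field_simp
  ring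

theorem tendsto_primitive_pow_three_div_sq_add_pow_four_atTop {a : ℝ} :
    Tendsto (fun y : ℝ => a / (6 * (y ^ 2 + a) ^ 3) - 1 / (4 * (y ^ 2 + a) ^ 2)) atTop (𝓝 0) := by
  have hs : Tendsto (fun y : ℝ => y ^ 2 + a) atTop atTop :=
    tendsto_atTop_add_const_right _ a (tendsto_pow_atTop two_ne_zero)
  have h3 := (tendsto_const_nhds (x := a)).div_atTop
    (((tendsto_pow_atTop three_ne_zero).comp hs).const_mul_atTop (by norm_num : (0 : ℝ) < 6))
  have h2 := (tendsto_const_nhds (x := (1 : ℝ))).div_atTop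
    (((tendsto_pow_atTop two_ne_zero).comp hs).const_mul_atTop (by norm_num : (0 : ℝ) < 4))
  simpa using h3.sub h2

theorem integrableOn_Ioi_pow_three_div_sq_add_pow_four {a : ℝ} (ha : 0 < a) :
    IntegrableOn (fun y : ℝ => y ^ 3 / (y ^ 2 + a) ^ 4) (Ioi 0) :=
  integrableOn_Ioi_deriv_of_nonneg'
    (fun y _ => hasDerivAt_primitive_pow_three_div_sq_add_pow_four ha y)
    (fun y (_ : 0 < y) => by positivity) tendsto_primitive_pow_three_div_sq_add_pow_four_atTop

theorem integral_Ioi_pow_three_div_sq_add_pow_four {a : ℝ} (ha : 0 < a) :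
    ∫ y in Ioi (0 : ℝ), y ^ 3 / (y ^ 2 + a) ^ 4 = 1 / (12 * a ^ 2) := by
  rw [integral_Ioi_of_hasDerivAt_of_nonneg'
    (fun y _ => hasDerivAt_primitive_pow_three_div_sq_add_pow_four ha y)
    (fun y (_ : 0 < y) => by positivity) tendsto_primitive_pow_three_div_sq_add_pow_four_atTop]
  field_simp
  ring

section FinrankFour

variable {E : Type*} [NormedAddCommGroup E] [InnerProductSpace ℝ E] [FiniteDimensional ℝ E]
  [MeasurableSpace E] [BorelSpace E]

theorem integrable_fun_norm_iff_of_finrank_eq_four (hE : Module.finrank ℝ E = 4) {f : ℝ → ℝ} :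
    Integrable (fun x : E => f ‖x‖) ↔ IntegrableOn (fun y => y ^ 3 * f y) (Ioi 0) := by
  have : Nontrivial E := Module.nontrivial_of_finrank_pos (R := ℝ) (by omega)
  simp only [integrable_fun_norm_addHaar volume, hE, smul_eq_mul]

theorem integral_fun_norm_of_finrank_eq_four (hE : Module.finrank ℝ E = 4) (f : ℝ → ℝ) :
    ∫ x : E, f ‖x‖ = 2 * π ^ 2 * ∫ y in Ioi (0 : ℝ), y ^ 3 * f y := by
  have : Nontrivial E := Module.nontrivial_of_finrank_pos (R := ℝ) (by omega)
  rw [integral_fun_norm_addHaar volume, hE, measureReal_def,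
    InnerProductSpace.volume_ball_of_dim_even (k := 2) hE]
  simp only [ENNReal.ofReal_one, one_pow, one_mul, Nat.factorial_two, Nat.cast_ofNat,
    Nat.add_one_sub_one, smul_eq_mul, nsmul_eq_mul]
  rw [ENNReal.toReal_ofReal (by positivity)]
  ring

end FinrankFour

/-- Identity (int-q10): `∫_{ℝ⁴} dq/(‖q‖²+M²)⁴ = π²/(6M⁴)`. -/
theorem integral_one_propagator_fourth (M : ℝ) (hM : 0 < M) :
    Integrable (fun q : EuclideanSpace ℝ (Fin 4) => 1 / (‖q‖ ^ 2 + M ^ 2) ^ 4) ∧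
    ∫ q : EuclideanSpace ℝ (Fin 4), 1 / (‖q‖ ^ 2 + M ^ 2) ^ 4 =
      π ^ 2 / (6 * M ^ 4) := by
  have hE : Module.finrank ℝ (EuclideanSpace ℝ (Fin 4)) = 4 := finrank_euclideanSpace_fin
  have ha : 0 < M ^ 2 := by positivity
  rw [integrable_fun_norm_iff_of_finrank_eq_four hE (f := fun r => 1 / (r ^ 2 + M ^ 2) ^ 4),
    integral_fun_norm_of_finrank_eq_four hE (fun r => 1 / (r ^ 2 + M ^ 2) ^ 4)]
  simp only [mul_one_div]
  refine ⟨integrableOn_Ioi_pow_three_div_sq_add_pow_four ha, ?_⟩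
  rw [integral_Ioi_pow_three_div_sq_add_pow_four ha]
  field_simp
  ring
end

section
/- Let M > 0 and fix coordinate indices μ, ν ∈ {1,2,3,4}. Then q ↦ q_μ q_ν/(‖q‖²+M²)⁴ is Lebesgue integrable on ℝ⁴ and ∫_{ℝ⁴} q_μ q_ν dq/(‖q‖²+M²)⁴ = δ_{μν} π²/(12M²), where δ_{μν} = 1 if μ = ν and 0 otherwise. -/
/-!
Reflecting the coordinate `q_μ` shows that the off-diagonal integrals vanish, and swapping two
coordinates shows that the four diagonal integrals agree, so each is a quarter of
`∫ ‖q‖² / (‖q‖² + M²)⁴ dq`. In polar coordinates the latter is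
`4 · vol(B) · ∫₀^∞ y⁵ / (y² + M²)⁴ dy = 4 · (π² / 2) · 1 / (6 M²)`, the radial integral being
computed from an explicit primitive.
-/

open MeasureTheory Real Filter Set Topology

theorem LinearIsometryEquiv.integral_comp {E F : Type*} [NormedAddCommGroup E]
    [InnerProductSpace ℝ E] [FiniteDimensional ℝ E] [MeasurableSpace E] [BorelSpace E]
    [NormedAddCommGroup F] [NormedSpace ℝ F] (e : E ≃ₗᵢ[ℝ] E) (g : E → F) :
    ∫ x, g (e x) = ∫ x, g x :=
  e.measurePreserving.integral_comp e.toMeasurableEquiv.measurableEmbedding g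

namespace EuclideanSpace

variable {ι : Type*} [Fintype ι] [DecidableEq ι]

noncomputable def negCoord (i : ι) : EuclideanSpace ℝ ι ≃ₗᵢ[ℝ] EuclideanSpace ℝ ι :=
  .piLpCongrRight 2 fun j => if j = i then .neg ℝ else .refl ℝ ℝ

theorem negCoord_apply (i : ι) (q : EuclideanSpace ℝ ι) (j : ι) :
    negCoord i q j = if j = i then -q j else q j := by
  by_cases h : j = i <;> simp [negCoord, h]

noncomputable def swapCoords (i j : ι) : EuclideanSpace ℝ ι ≃ₗᵢ[ℝ] EuclideanSpace ℝ ι :=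
  .piLpCongrLeft 2 ℝ ℝ (Equiv.swap i j)

theorem swapCoords_apply (i j : ι) (q : EuclideanSpace ℝ ι) (k : ι) :
    swapCoords i j q k = q (Equiv.swap i j k) := by
  simp [swapCoords, Equiv.piCongrLeft'_apply, Equiv.symm_swap]

theorem integral_coord_mul_coord_mul_radial_of_ne (f : ℝ → ℝ) {i j : ι} (hij : i ≠ j) :
    ∫ q : EuclideanSpace ℝ ι, q i * q j * f ‖q‖ = 0 := by
  have h := (negCoord i).integral_comp fun q : EuclideanSpace ℝ ι => q i * q j * f ‖q‖
  simp only [LinearIsometryEquiv.norm_map, negCoord_apply, if_neg hij.symm, ↓reduceIte,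
    neg_mul, integral_neg] at h
  linarith

theorem integral_coord_mul_self_mul_radial (f : ℝ → ℝ) (i j : ι) :
    ∫ q : EuclideanSpace ℝ ι, q i * q i * f ‖q‖ = ∫ q : EuclideanSpace ℝ ι, q j * q j * f ‖q‖ := by
  have h := (swapCoords i j).integral_comp fun q : EuclideanSpace ℝ ι => q j * q j * f ‖q‖
  simpa only [LinearIsometryEquiv.norm_map, swapCoords_apply, Equiv.swap_apply_right] using h

omit [DecidableEq ι] in
theorem integrable_coord_mul_coord_mul_radial {f : ℝ → ℝ} (hf : Measurable f)
    (h : Integrable fun q : EuclideanSpace ℝ ι => ‖q‖ ^ 2 * f ‖q‖) (i j : ι) :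
    Integrable fun q : EuclideanSpace ℝ ι => q i * q j * f ‖q‖ := by
  refine h.mono (by fun_prop) (.of_forall fun q => ?_)
  simp only [norm_mul, norm_norm, sq]
  gcongr
  · exact PiLp.norm_apply_le q i
  · exact PiLp.norm_apply_le q j

theorem card_mul_integral_coord_mul_self_mul_radial {f : ℝ → ℝ} (hf : Measurable f)
    (h : Integrable fun q : EuclideanSpace ℝ ι => ‖q‖ ^ 2 * f ‖q‖) (i : ι) :
    Fintype.card ι * ∫ q : EuclideanSpace ℝ ι, q i * q i * f ‖q‖ =
      ∫ q : EuclideanSpace ℝ ι, ‖q‖ ^ 2 * f ‖q‖ := by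
  calc Fintype.card ι * ∫ q : EuclideanSpace ℝ ι, q i * q i * f ‖q‖
      = ∑ j, ∫ q : EuclideanSpace ℝ ι, q j * q j * f ‖q‖ := by
        simp [integral_coord_mul_self_mul_radial f _ i]
    _ = ∫ q : EuclideanSpace ℝ ι, ‖q‖ ^ 2 * f ‖q‖ := by
        rw [← integral_finsetSum _ fun j _ => integrable_coord_mul_coord_mul_radial hf h j j]
        congr with q
        rw [real_norm_sq_eq, Finset.sum_mul]
        simp only [sq]

end EuclideanSpace

section QuarticPropagator

variable {M : ℝ}

/-- With `u = y² + M²` one has `y⁵ dy = (u - M²)² du / 2`, whence this primitive. -/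
noncomputable def quarticPrimitive (M y : ℝ) : ℝ :=
  (-(y ^ 2 + M ^ 2)⁻¹ + M ^ 2 * ((y ^ 2 + M ^ 2) ^ 2)⁻¹ - M ^ 4 / 3 * ((y ^ 2 + M ^ 2) ^ 3)⁻¹) / 2

theorem hasDerivAt_quarticPrimitive (hM : M ≠ 0) (y : ℝ) :
    HasDerivAt (quarticPrimitive M) (y ^ 5 / (y ^ 2 + M ^ 2) ^ 4) y := by
  have hu : y ^ 2 + M ^ 2 ≠ 0 := by positivity
  have h1 : HasDerivAt (fun y : ℝ => y ^ 2 + M ^ 2) (2 * y) y := by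
    simpa using (hasDerivAt_pow 2 y).add_const (M ^ 2)
  have ha := h1.inv hu
  have hb := ((h1.pow 2).inv (pow_ne_zero 2 hu)).const_mul (M ^ 2)
  have hc := ((h1.pow 3).inv (pow_ne_zero 3 hu)).const_mul (M ^ 4 / 3)
  refine (((ha.neg.add hb).sub hc).div_const 2).congr_deriv ?_
  simp only [Pi.pow_apply]
  field_simp
  ring

theorem tendsto_quarticPrimitive_atTop : Tendsto (quarticPrimitive M) atTop (𝓝 0) := by
  have hu : Tendsto (fun y : ℝ => y ^ 2 + M ^ 2) atTop atTop :=
    tendsto_atTop_add_const_right _ _ (tendsto_pow_atTop two_ne_zero)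
  have h (n : ℕ) (hn : n ≠ 0) : Tendsto (fun y : ℝ => ((y ^ 2 + M ^ 2) ^ n)⁻¹) atTop (𝓝 0) :=
    ((tendsto_pow_atTop hn).comp hu).inv_tendsto_atTop
  rw [show (0 : ℝ) = (-0 + M ^ 2 * 0 - M ^ 4 / 3 * 0) / 2 by ring]
  exact ((hu.inv_tendsto_atTop.neg.add ((h 2 two_ne_zero).const_mul (M ^ 2))).sub
    ((h 3 three_ne_zero).const_mul (M ^ 4 / 3))).div_const 2

theorem pow_five_div_nonneg {y : ℝ} (hy : 0 ≤ y) : 0 ≤ y ^ 5 / (y ^ 2 + M ^ 2) ^ 4 := by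
  positivity

theorem integrableOn_Ioi_pow_five_div (hM : M ≠ 0) :
    IntegrableOn (fun y : ℝ => y ^ 5 / (y ^ 2 + M ^ 2) ^ 4) (Ioi 0) :=
  integrableOn_Ioi_deriv_of_nonneg' (fun y _ => hasDerivAt_quarticPrimitive hM y)
    (fun _ hy => pow_five_div_nonneg (le_of_lt hy)) tendsto_quarticPrimitive_atTop

theorem integral_Ioi_pow_five_div (hM : M ≠ 0) :
    ∫ y in Ioi (0 : ℝ), y ^ 5 / (y ^ 2 + M ^ 2) ^ 4 = 1 / (6 * M ^ 2) := by
  rw [integral_Ioi_of_hasDerivAt_of_nonneg' (fun y _ => hasDerivAt_quarticPrimitive hM y)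
      (fun _ hy => pow_five_div_nonneg (le_of_lt hy)) tendsto_quarticPrimitive_atTop,
    quarticPrimitive]
  field_simp
  ring

end QuarticPropagator

theorem EuclideanSpace.volume_real_ball_fin_four :
    volume.real (Metric.ball (0 : EuclideanSpace ℝ (Fin 4)) 1) = π ^ 2 / 2 := by
  rw [measureReal_def, InnerProductSpace.volume_ball_of_dim_even (k := 2) (by simp)]
  norm_num [ENNReal.toReal_ofReal (by positivity : (0 : ℝ) ≤ π ^ 2 / 2)]

theorem integrable_norm_sq_mul_inv_add_sq_pow_four {M : ℝ} (hM : M ≠ 0) :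
    Integrable fun q : EuclideanSpace ℝ (Fin 4) => ‖q‖ ^ 2 * ((‖q‖ ^ 2 + M ^ 2) ^ 4)⁻¹ := by
  rw [integrable_fun_norm_addHaar volume (f := fun y => y ^ 2 * ((y ^ 2 + M ^ 2) ^ 4)⁻¹),
    finrank_euclideanSpace_fin]
  refine (integrableOn_Ioi_pow_five_div hM).congr_fun (fun y _ => ?_) measurableSet_Ioi
  simp only [smul_eq_mul]
  ring

theorem integral_norm_sq_mul_inv_add_sq_pow_four {M : ℝ} (hM : M ≠ 0) :
    ∫ q : EuclideanSpace ℝ (Fin 4), ‖q‖ ^ 2 * ((‖q‖ ^ 2 + M ^ 2) ^ 4)⁻¹ = π ^ 2 / (3 * M ^ 2) := by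
  rw [integral_fun_norm_addHaar volume fun y => y ^ 2 * ((y ^ 2 + M ^ 2) ^ 4)⁻¹,
    finrank_euclideanSpace_fin, EuclideanSpace.volume_real_ball_fin_four,
    setIntegral_congr_fun measurableSet_Ioi (g := fun y => y ^ 5 / (y ^ 2 + M ^ 2) ^ 4)
      (fun y _ => by simp only [smul_eq_mul]; ring),
    integral_Ioi_pow_five_div hM]
  simp only [nsmul_eq_mul, smul_eq_mul]
  field_simp
  ring

/-- Identity (int-q11): `∫_{ℝ⁴} q_μ q_ν dq/(‖q‖²+M²)⁴ = δ_{μν} π²/(12M²)`. -/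
theorem integral_one_propagator_fourth_two_coords (M : ℝ) (hM : 0 < M) (μ ν : Fin 4) :
    Integrable (fun q : EuclideanSpace ℝ (Fin 4) =>
      q μ * q ν / (‖q‖ ^ 2 + M ^ 2) ^ 4) ∧
    ∫ q : EuclideanSpace ℝ (Fin 4), q μ * q ν / (‖q‖ ^ 2 + M ^ 2) ^ 4 =
      (if μ = ν then (1 : ℝ) else 0) * π ^ 2 / (12 * M ^ 2) := by
  have hf : Measurable fun r : ℝ => ((r ^ 2 + M ^ 2) ^ 4)⁻¹ := by fun_prop
  have hint := integrable_norm_sq_mul_inv_add_sq_pow_four hM.ne'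
  have hdiv (i j : Fin 4) (q : EuclideanSpace ℝ (Fin 4)) :
      q i * q j / (‖q‖ ^ 2 + M ^ 2) ^ 4 = q i * q j * ((‖q‖ ^ 2 + M ^ 2) ^ 4)⁻¹ :=
    div_eq_mul_inv _ _
  simp only [hdiv]
  refine ⟨EuclideanSpace.integrable_coord_mul_coord_mul_radial hf hint μ ν, ?_⟩
  split_ifs with h
  · subst h
    have hdiag := (EuclideanSpace.card_mul_integral_coord_mul_self_mul_radial hf hint μ).trans
      (integral_norm_sq_mul_inv_add_sq_pow_four hM.ne')
    rw [Fintype.card_fin] at hdiag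
    linear_combination hdiag / 4
  · rw [zero_mul, zero_div]
    exact EuclideanSpace.integral_coord_mul_coord_mul_radial_of_ne
      (fun r => ((r ^ 2 + M ^ 2) ^ 4)⁻¹) h
end

section
/- Let R be an associative ring that is an algebra over ℂ, let s₁, s₂, g ∈ R and a₁, a₂ ∈ ℝ, M ∈ ℝ be such that s₁² = a₁·1, s₂² = a₂·1, g·s₁ = -s₁·g, and g·s₂ = -s₂·g. Then (-i·s₂ + M·1) · g · (-i·s₁ + M·1) = ((a₂ + M²)·1 + (-i·s₂ + M·1)·(i·(s₁ - s₂))) · g. -/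
/-- The denominator-cleared propagator identity (pr-ga5-pr): if `s₁² = a₁`,
`s₂² = a₂`, and `g` anticommutes with `s₁` and `s₂`, then
`(-i s₂ + M)·g·(-i s₁ + M) = ((a₂ + M²) + (-i s₂ + M)·i(s₁ - s₂))·g`. -/
theorem propagator_gamma5_identity (R : Type*) [Ring R] [Algebra ℂ R]
    (s₁ s₂ g : R) (a₁ a₂ M : ℝ)
    (h1 : s₁ * s₁ = (a₁ : ℂ) • (1 : R))
    (h2 : s₂ * s₂ = (a₂ : ℂ) • (1 : R))
    (hg1 : g * s₁ = -(s₁ * g))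
    (hg2 : g * s₂ = -(s₂ * g)) :
    (-(Complex.I • s₂) + (M : ℂ) • (1 : R)) * g * (-(Complex.I • s₁) + (M : ℂ) • (1 : R)) =
      (((a₂ + M ^ 2 : ℝ) : ℂ) • (1 : R) +
        (-(Complex.I • s₂) + (M : ℂ) • (1 : R)) * (Complex.I • (s₁ - s₂))) * g := by
  have key : g * (-(Complex.I • s₁) + (M : ℂ) • (1 : R))
      = (Complex.I • s₁ + (M : ℂ) • (1 : R)) * g := by
    simp [mul_add, add_mul, mul_smul_comm, smul_mul_assoc, hg1]
  rw [mul_assoc, key, ← mul_assoc]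
  simp only [mul_add, add_mul, mul_smul_comm, smul_mul_assoc, smul_smul, mul_sub, sub_mul,
    neg_mul, mul_neg, h1, h2, mul_one, one_mul, smul_add, smul_sub, smul_neg]
  push_cast
  simp [smul_smul, Complex.I_mul_I]
  simp only [← mul_assoc, Complex.I_mul_I]
  module
end
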